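/- arXiv:2105.13075 — 3 statements merged into one kernel-verified Lean document; each statement's English description precedes it below -/
import Mathlib

section
/- Let W be a finite Coxeter group and u, x, y ∈ W. Suppose that x ≤_R u⁻¹ and y ≤_R u⁻¹ in the right weak Bruhat order, and that x ≤ y in the strong Bruhat order. Then u x ≥ u y in the strong Bruhat order. -/
open Polynomial

namespace PaperBase

variable {B : Type*} {W : Type*} [Group W] {M : CoxeterMatrix B} (cs : CoxeterSystem M W)

/-- The strong Bruhat order: `u ≤ w` iff some reduced word for `w` has a sublist that is a
reduced word for `u`. -/
def BruhatLE (u w : W) : Prop :=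
  ∃ ω : List B, cs.IsReduced ω ∧ cs.wordProd ω = w ∧
    ∃ ω' : List B, ω'.Sublist ω ∧ cs.IsReduced ω' ∧ cs.wordProd ω' = u

/-- The strict strong Bruhat order. -/
def BruhatLT (u w : W) : Prop := BruhatLE cs u w ∧ u ≠ w

/-- The right weak Bruhat order: `u ≤_R w` iff `ℓ(w) = ℓ(u) + ℓ(u⁻¹ w)`. -/
def RWeakLE (u w : W) : Prop := cs.length w = cs.length u + cs.length (u⁻¹ * w)

/-- `U_ω ↑ v` along a word `ω`. -/
noncomputable def upLWord (ω : List B) (v : W) : W :=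
  ω.foldr (fun i x => if cs.length x < cs.length (cs.simple i * x) then cs.simple i * x else x) v

/-- `U_ω ↓ v` along a word `ω`. -/
noncomputable def downLWord (ω : List B) (v : W) : W :=
  ω.foldr (fun i x => if cs.length (cs.simple i * x) < cs.length x then cs.simple i * x else x) v

/-- `v ↑ U_ω` along a word `ω`. -/
noncomputable def upRWord (v : W) (ω : List B) : W :=
  ω.foldl (fun x i => if cs.length x < cs.length (x * cs.simple i) then x * cs.simple i else x) v

/-- `v ↓ U_ω` along a word `ω`. -/
noncomputable def downRWord (v : W) (ω : List B) : W :=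
  ω.foldl (fun x i => if cs.length (x * cs.simple i) < cs.length x then x * cs.simple i else x) v

/-- A chosen reduced word for `w`. -/
noncomputable def rword (w : W) : List B := (cs.exists_reduced_word' w).choose

theorem rword_isReduced (w : W) : cs.IsReduced (rword cs w) :=
  (cs.exists_reduced_word' w).choose_spec.1

theorem rword_wordProd (w : W) : cs.wordProd (rword cs w) = w :=
  ((cs.exists_reduced_word' w).choose_spec.2).symm

/-- `U_w ↑ v` for `w : W`, computed along a chosen reduced word for `w`. -/
noncomputable def upL (w v : W) : W := upLWord cs (rword cs w) v

/-- `U_w ↓ v` for `w : W`. -/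
noncomputable def downL (w v : W) : W := downLWord cs (rword cs w) v

/-- `v ↑ U_w` for `w : W`. -/
noncomputable def upR (v w : W) : W := upRWord cs v (rword cs w)

/-- `v ↓ U_w` for `w : W`. -/
noncomputable def downR (v w : W) : W := downRWord cs v (rword cs w)

/-- The Demazure (0-Hecke) product `u ∘ w`. -/
noncomputable def dem (u w : W) : W := upRWord cs u (rword cs w)

/-- Left multiplication by the Hecke algebra generator `T_{s i}` on the free
`ℤ[q]`-module with basis `{T_w}`, realized as `W →₀ ℤ[q]`:
`T_s T_w = T_{sw}` if `sw > w`, and `T_s T_w = (q-1) T_w + q T_{sw}` if `sw < w`. -/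
noncomputable def heckeMulSimple (i : B) (f : W →₀ Polynomial ℤ) : W →₀ Polynomial ℤ :=
  f.sum fun w c =>
    if cs.length w < cs.length (cs.simple i * w)
    then Finsupp.single (cs.simple i * w) c
    else Finsupp.single w ((X - 1) * c) + Finsupp.single (cs.simple i * w) (X * c)

/-- Left multiplication by `T_{π ω}` along a word `ω`. -/
noncomputable def heckeMulWord (ω : List B) (f : W →₀ Polynomial ℤ) : W →₀ Polynomial ℤ :=
  ω.foldr (heckeMulSimple cs) f

/-- The product `T_x T_y` in the Hecke algebra, expanded in the basis `{T_w}`. -/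
noncomputable def TT (x y : W) : W →₀ Polynomial ℤ :=
  heckeMulWord cs (rword cs x) (Finsupp.single y 1)

open Classical in
/-- The linear functional `Λ_w` with `Λ_w (T_y) = q^{ℓ(y)}` if `y ≤ w`, else `0`. -/
noncomputable def Lam (w : W) (f : W →₀ Polynomial ℤ) : Polynomial ℤ :=
  f.sum fun y c => if BruhatLE cs y w then X ^ cs.length y * c else 0

/-- `Θ(x, y, w) = Λ_w (T_x T_{y⁻¹})`. -/
noncomputable def Theta (x y w : W) : Polynomial ℤ := Lam cs w (TT cs x y⁻¹)


section PXDevelopment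

open List

local prefix:100 "ℓ" => cs.length
local prefix:100 "π" => cs.wordProd
local prefix:100 "ris" => cs.rightInvSeq
local prefix:100 "lis" => cs.leftInvSeq
local prefix:100 "s" => cs.simple

/-! ### Part 1: the sign representation and the strong exchange property -/

lemma px_ris_cons (i : B) (ω : List B) :
    ris (i :: ω) = ((π ω)⁻¹ * s i * π ω) :: ris ω := rfl

lemma px_simple_conj_eq_iff (i : B) (w : W) :
    s i * w * s i = s i ↔ w = s i := by
  rw [mul_assoc, mul_eq_left, mul_eq_one_iff_eq_inv, cs.inv_simple]

section Eta

variable [DecidableEq W]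

private def etaFun (i : B) : W × ℤˣ → W × ℤˣ :=
  fun p => (s i * p.1 * s i, if p.1 = s i then -p.2 else p.2)

lemma px_etaFun_involutive (i : B) : Function.Involutive (etaFun cs i) := by
  rintro ⟨w, e⟩
  show etaFun cs i (s i * w * s i, _) = _
  by_cases h : w = s i
  · subst h
    simp [etaFun, cs.simple_mul_simple_self]
  · have h2 : ¬(s i * w * s i = s i) := fun hh => h ((px_simple_conj_eq_iff cs i w).mp hh)
    simp only [etaFun, if_neg h, if_neg h2]
    refine Prod.ext ?_ rfl
    show s i * (s i * w * s i) * s i = w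
    simp [mul_assoc, cs.simple_mul_simple_cancel_left]

/-- The sign permutation attached to a simple reflection. -/
noncomputable def eta (i : B) : Equiv.Perm (W × ℤˣ) :=
  Function.Involutive.toPerm _ (px_etaFun_involutive cs i)

lemma px_eta_apply (i : B) (p : W × ℤˣ) : eta cs i p = etaFun cs i p := rfl

/-- The product of the sign permutations along a word. -/
noncomputable def etaWord (ω : List B) : Equiv.Perm (W × ℤˣ) :=
  (ω.map (eta cs)).prod

lemma px_etaWord_nil : etaWord cs ([] : List B) = 1 := by simp [etaWord]

lemma px_etaWord_cons (i : B) (ω : List B) :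
    etaWord cs (i :: ω) = eta cs i * etaWord cs ω := by simp [etaWord]

lemma px_etaWord_apply (ω : List B) (p : W × ℤˣ) :
    etaWord cs ω p =
      (π ω * p.1 * (π ω)⁻¹, (-1 : ℤˣ) ^ ((ris ω).count p.1) * p.2) := by
  induction ω generalizing p with
  | nil => simp [px_etaWord_nil]
  | cons i ω ih =>
    rw [px_etaWord_cons, Equiv.Perm.mul_apply, ih, px_eta_apply]
    unfold etaFun
    have hcond : ∀ x : W, (π ω * x * (π ω)⁻¹ = s i) ↔ x = (π ω)⁻¹ * s i * π ω := by
      intro x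
      constructor
      · intro h
        rw [← h]
        group
      · intro h
        rw [h]
        group
    have hcount : ((ris (i :: ω)).count p.1) =
        (ris ω).count p.1 + if p.1 = (π ω)⁻¹ * s i * π ω then 1 else 0 := by
      rw [px_ris_cons, List.count_cons]
      congr 1
      by_cases h : p.1 = (π ω)⁻¹ * s i * π ω
      · rw [if_pos h, if_pos (by simp [h])]
      · rw [if_neg h, if_neg (by simp [beq_iff_eq]; exact fun hh => h hh.symm)]
    refine Prod.ext ?_ ?_
    · show s i * (π ω * p.1 * (π ω)⁻¹) * s i = π (i :: ω) * p.1 * (π (i :: ω))⁻¹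
      rw [cs.wordProd_cons, mul_inv_rev, cs.inv_simple]
      group
    · show (if π ω * p.1 * (π ω)⁻¹ = s i then -((-1 : ℤˣ) ^ ((ris ω).count p.1) * p.2)
          else (-1 : ℤˣ) ^ ((ris ω).count p.1) * p.2)
        = (-1 : ℤˣ) ^ ((ris (i :: ω)).count p.1) * p.2
      rw [hcount]
      by_cases h : p.1 = (π ω)⁻¹ * s i * π ω
      · rw [if_pos ((hcond p.1).mpr h), if_pos h, pow_add, pow_one]
        simp [mul_neg, neg_mul]
      · rw [if_neg (fun hh => h ((hcond p.1).mp hh)), if_neg h, add_zero]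

end Eta

lemma px_ris_append (ω₁ ω₂ : List B) :
    ris (ω₁ ++ ω₂) = (ris ω₁).map (fun t => (π ω₂)⁻¹ * t * π ω₂) ++ ris ω₂ := by
  induction ω₁ with
  | nil => simp [px_ris_cons]
  | cons i ω₁ ih =>
    rw [List.cons_append, px_ris_cons, px_ris_cons, ih, List.map_cons, List.cons_append]
    congr 1
    rw [cs.wordProd_append, mul_inv_rev]
    group

lemma px_lis_eq_map (ω : List B) :
    lis ω = (ris ω).map (fun t => π ω * t * (π ω)⁻¹) := by
  apply List.ext_getElem
  · simp
  · intro j h1 h2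
    have h1' : j < ω.length := by simpa using h1
    have e1 : (lis ω)[j] = (lis ω).getD j 1 := by
      rw [List.getD_eq_getElem _ _ h1]
    have e2 : ((ris ω).map (fun t => π ω * t * (π ω)⁻¹))[j]
        = π ω * ((ris ω).getD j 1) * (π ω)⁻¹ := by
      rw [List.getElem_map]
      congr 1
      congr 1
      rw [List.getD_eq_getElem]
    rw [e1, e2]
    have ha := cs.getD_leftInvSeq_mul_wordProd ω j
    have hb := cs.wordProd_mul_getD_rightInvSeq ω j
    rw [← hb] at ha
    rw [← ha]
    group

lemma px_ris_alternating (i i' : B) (m : ℕ) :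
    ris (CoxeterSystem.alternatingWord i i' m)
      = ((List.range m).reverse).map
        (fun d => (π (CoxeterSystem.alternatingWord i i' d))⁻¹
            * π (CoxeterSystem.alternatingWord i i' (d + 1))) := by
  induction m with
  | zero => simp [CoxeterSystem.alternatingWord]
  | succ m ih =>
    rw [CoxeterSystem.alternatingWord_succ', px_ris_cons, ih, List.range_succ,
      List.reverse_append, List.reverse_singleton, List.singleton_append, List.map_cons]
    congr 1
    rw [CoxeterSystem.alternatingWord_succ', cs.wordProd_cons]
    group

lemma px_simple_pow_comm (i i' : B) (k : ℕ) :
    s i' * (s i * s i') ^ k = ((s i * s i') ^ k)⁻¹ * s i' := by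
  induction k with
  | zero => simp
  | succ k ih =>
    have hbase : s i' * (s i * s i') = (s i * s i')⁻¹ * s i' := by
      rw [mul_inv_rev, cs.inv_simple, cs.inv_simple]
      group
    calc s i' * (s i * s i') ^ (k + 1)
        = (s i' * (s i * s i') ^ k) * (s i * s i') := by rw [pow_succ, mul_assoc]
      _ = ((s i * s i') ^ k)⁻¹ * (s i' * (s i * s i')) := by rw [ih, mul_assoc]
      _ = ((s i * s i') ^ k)⁻¹ * ((s i * s i')⁻¹ * s i') := by rw [hbase]
      _ = (((s i * s i') ^ k)⁻¹ * (s i * s i')⁻¹) * s i' := by rw [mul_assoc]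
      _ = ((s i * s i') ^ (k + 1))⁻¹ * s i' := by
          conv_rhs => rw [pow_succ', mul_inv_rev]

lemma px_alt_quot (i i' : B) (d : ℕ) :
    (π (CoxeterSystem.alternatingWord i i' d))⁻¹
        * π (CoxeterSystem.alternatingWord i i' (d + 1))
      = ((s i * s i') ^ d)⁻¹ * s i' := by
  rcases Nat.even_or_odd d with ⟨a, ha⟩ | ⟨a, ha⟩
  · subst ha
    rw [cs.prod_alternatingWord_eq_mul_pow, cs.prod_alternatingWord_eq_mul_pow]
    have e1 : Even (a + a) := ⟨a, rfl⟩
    have e2 : ¬ Even (a + a + 1) := by simp [Nat.even_add_one, e1]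
    have d1 : (a + a) / 2 = a := by omega
    have d2 : (a + a + 1) / 2 = a := by omega
    rw [if_pos e1, if_neg e2, d1, d2, one_mul]
    rw [px_simple_pow_comm cs i i', ← mul_assoc, ← mul_inv_rev, ← pow_add]
  · have ha' : d = a + a + 1 := by omega
    subst ha'
    rw [cs.prod_alternatingWord_eq_mul_pow, cs.prod_alternatingWord_eq_mul_pow]
    have e1 : ¬ Even (a + a + 1) := Nat.not_even_iff_odd.mpr ⟨a, by omega⟩
    have e2 : Even (a + a + 1 + 1) := ⟨a + 1, by omega⟩
    have d1 : (a + a + 1) / 2 = a := by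
      rw [show a + a + 1 = 2 * a + 1 by omega, Nat.mul_add_div (by norm_num)]
      norm_num
    have d2 : (a + a + 1 + 1) / 2 = a + 1 := by
      have h : a + a + 1 + 1 = (a + 1) * 2 := by omega
      rw [h, Nat.mul_div_cancel _ (by norm_num)]
    rw [if_neg e1, if_pos e2, d1, d2, one_mul, mul_inv_rev, cs.inv_simple, mul_assoc,
      px_simple_pow_comm cs i i', ← mul_assoc, ← mul_inv_rev, ← pow_add,
      show a + 1 + a = a + a + 1 by omega]

lemma px_alt_quot_period (i i' : B) (d : ℕ) :
    (π (CoxeterSystem.alternatingWord i i' (M i i' + d)))⁻¹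
        * π (CoxeterSystem.alternatingWord i i' (M i i' + d + 1))
      = (π (CoxeterSystem.alternatingWord i i' d))⁻¹
          * π (CoxeterSystem.alternatingWord i i' (d + 1)) := by
  rw [px_alt_quot, px_alt_quot, pow_add, mul_inv_rev, cs.simple_mul_simple_pow i i']
  simp

lemma px_pow_eq_etaWord [DecidableEq W] (i i' : B) (m : ℕ) :
    (eta cs i * eta cs i') ^ m = etaWord cs (CoxeterSystem.alternatingWord i i' (2 * m)) := by
  induction m with
  | zero =>
    show _ = etaWord cs []
    simp [px_etaWord_nil]
  | succ m ih =>
    have h2 : 2 * (m + 1) = (2 * m) + 1 + 1 := by omega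
    have ha : CoxeterSystem.alternatingWord i i' (2 * (m + 1))
        = i :: i' :: CoxeterSystem.alternatingWord i i' (2 * m) := by
      rw [h2, CoxeterSystem.alternatingWord_succ', CoxeterSystem.alternatingWord_succ']
      have o1 : ¬ Even (2 * m + 1) := by simp [Nat.even_add_one]
      have o2 : Even (2 * m) := ⟨m, by omega⟩
      rw [if_neg o1, if_pos o2]
    rw [ha, px_etaWord_cons, px_etaWord_cons, ← ih, pow_succ']
    rw [mul_assoc]

lemma px_count_even_alt [DecidableEq W] (i i' : B) (t : W) :
    Even ((ris (CoxeterSystem.alternatingWord i i' (2 * M i i'))).count t) := by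
  rw [px_ris_alternating, List.map_reverse, List.count_reverse]
  have h2 : 2 * M i i' = M i i' + M i i' := by omega
  rw [h2, List.range_add, List.map_append, List.count_append, List.map_map]
  have : (List.range (M i i')).map
        ((fun d => (π (CoxeterSystem.alternatingWord i i' d))⁻¹
            * π (CoxeterSystem.alternatingWord i i' (d + 1))) ∘ (fun x => M i i' + x))
      = (List.range (M i i')).map
        (fun d => (π (CoxeterSystem.alternatingWord i i' d))⁻¹
            * π (CoxeterSystem.alternatingWord i i' (d + 1))) := by
    apply List.map_congr_left
    intro d _
    show (π (CoxeterSystem.alternatingWord i i' (M i i' + d)))⁻¹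
        * π (CoxeterSystem.alternatingWord i i' (M i i' + d + 1)) = _
    exact px_alt_quot_period cs i i' d
  rw [this]
  exact ⟨_, rfl⟩

lemma px_isLiftable [DecidableEq W] : M.IsLiftable (eta cs) := by
  intro i i'
  apply Equiv.ext
  rintro ⟨w, e⟩
  rw [px_pow_eq_etaWord, px_etaWord_apply]
  have hprod : π (CoxeterSystem.alternatingWord i i' (2 * M i i')) = 1 := by
    rw [cs.prod_alternatingWord_eq_mul_pow]
    have e1 : Even (2 * M i i') := ⟨M i i', by omega⟩
    have d1 : 2 * M i i' / 2 = M i i' := by omega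
    rw [if_pos e1, d1, one_mul, cs.simple_mul_simple_pow i i']
  have hcount := px_count_even_alt cs i i' w
  rw [hprod, hcount.neg_one_pow]
  simp

section SignHom

variable [DecidableEq W]

/-- The sign representation of `W`. -/
noncomputable def signHom : W →* Equiv.Perm (W × ℤˣ) :=
  cs.lift ⟨eta cs, px_isLiftable cs⟩

lemma px_signHom_wordProd (ω : List B) : signHom cs (π ω) = etaWord cs ω := by
  rw [show π ω = (ω.map (cs.simple)).prod from rfl, map_list_prod, List.map_map]
  unfold etaWord
  congr 1
  apply List.map_congr_left
  intro i _
  exact cs.lift_apply_simple (px_isLiftable cs) i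

lemma px_neg_one_pow_parity {a b : ℕ} (h : ((-1 : ℤˣ)) ^ a = (-1 : ℤˣ) ^ b) :
    (Even a ↔ Even b) := by
  rcases Nat.even_or_odd a with ha | ha <;> rcases Nat.even_or_odd b with hb | hb
  · simp [ha, hb]
  · rw [ha.neg_one_pow, hb.neg_one_pow] at h
    exact absurd h (by decide)
  · rw [ha.neg_one_pow, hb.neg_one_pow] at h
    exact absurd h (by decide)
  · simp [Nat.not_even_iff_odd.mpr ha, Nat.not_even_iff_odd.mpr hb]

/-- Mod-2 well-definedness of the number of times a given element appears in the
right inversion sequence, over all words with a fixed product. -/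
lemma px_count_ris_parity {ω ω' : List B} (h : π ω = π ω') (t : W) :
    Even ((ris ω).count t) ↔ Even ((ris ω').count t) := by
  have h1 := congrArg (signHom cs) h
  rw [px_signHom_wordProd, px_signHom_wordProd] at h1
  have h2 := congrArg (fun f : Equiv.Perm (W × ℤˣ) => (f (t, 1)).2) h1
  simp only [px_etaWord_apply, mul_one] at h2
  exact px_neg_one_pow_parity h2

/-- The count of `t` in the right inversion sequence of a palindromic word for `t` is odd. -/
lemma px_count_palindrome_odd (ρ : List B) (k : B) :
    Odd ((ris (ρ ++ ([k] ++ ρ.reverse))).count (π ρ * s k * (π ρ)⁻¹)) := by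
  set r : W := π ρ with hr
  set t : W := r * s k * r⁻¹ with ht
  rw [px_ris_append, px_ris_append, List.count_append, List.count_append]
  have hπrev : π ρ.reverse = r⁻¹ := by rw [cs.wordProd_reverse]
  -- middle block
  have hmid : (ris [k]).map (fun x => (π ρ.reverse)⁻¹ * x * π ρ.reverse) = [t] := by
    have : ris [k] = [s k] := by simp [px_ris_cons, cs.wordProd_nil]
    rw [this, List.map_singleton, hπrev, ht, inv_inv]
  -- first block: count in conjugated ris ρ
  have hc : π ([k] ++ ρ.reverse) = s k * r⁻¹ := by
    rw [cs.wordProd_append, cs.wordProd_singleton, hπrev]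
  have hblock1 : ((ris ρ).map (fun x => (π ([k] ++ ρ.reverse))⁻¹ * x * π ([k] ++ ρ.reverse))).count t
      = (ris ρ).count (s k) := by
    rw [hc]
    have hinj : Function.Injective (fun x : W => (s k * r⁻¹)⁻¹ * x * (s k * r⁻¹)) := by
      intro x y hxy
      simpa using mul_left_cancel (mul_right_cancel hxy)
    have htt : t = (fun x : W => (s k * r⁻¹)⁻¹ * x * (s k * r⁻¹)) (s k) := by
      show t = (s k * r⁻¹)⁻¹ * s k * (s k * r⁻¹)
      rw [ht]
      group
    nth_rw 1 [htt]
    rw [List.count_map_of_injective _ _ hinj]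
  -- third block
  have hblock3 : (ris ρ.reverse).count t = (ris ρ).count (s k) := by
    rw [cs.rightInvSeq_reverse, List.count_reverse, px_lis_eq_map]
    have hinj : Function.Injective (fun x : W => r * x * r⁻¹) := by
      intro x y hxy
      simpa using mul_left_cancel (mul_right_cancel hxy)
    have htt : t = (fun x : W => r * x * r⁻¹) (s k) := rfl
    rw [htt, ← hr, List.count_map_of_injective _ _ hinj]
  rw [hblock1, hmid, hblock3]
  have : List.count t [t] = 1 := by simp
  rw [this]
  exact ⟨(ris ρ).count (s k), by ring⟩

/-- The easy direction: odd count implies right inversion. -/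
lemma px_odd_imp_lt (ω : List B) {t : W} (h : Odd ((ris ω).count t)) :
    ℓ (π ω * t) < ℓ (π ω) := by
  obtain ⟨ω', hred, hω'⟩ := cs.exists_reduced_word' (π ω)
  have hpar := px_count_ris_parity cs hω' t
  have hodd' : Odd ((ris ω').count t) := by
    rw [← Nat.not_even_iff_odd] at h ⊢
    exact fun he => h (hpar.mpr he)
  have hmem : t ∈ ris ω' := by
    rw [← List.count_pos_iff]
    rcases hodd' with ⟨a, ha⟩
    omega
  have := (cs.isRightInversion_of_mem_rightInvSeq hred hmem).2
  rwa [← hω'] at this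

/-- The parity characterization of right inversions, for arbitrary words. -/
lemma px_lt_iff_odd (ω : List B) {t : W} (ht : cs.IsReflection t) :
    ℓ (π ω * t) < ℓ (π ω) ↔ Odd ((ris ω).count t) := by
  constructor
  · intro h
    obtain ⟨r, k, htk⟩ := id ht
    obtain ⟨ρ, hρ⟩ : ∃ ρ : List B, π ρ = r := ⟨_, (cs.exists_reduced_word' r).choose_spec.2.symm⟩
    obtain ⟨ν, hνred, hν⟩ := cs.exists_reduced_word' (π ω * t)
    set pal : List B := ρ ++ ([k] ++ ρ.reverse) with hpal
    have htpal : π pal = t := by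
      rw [hpal, cs.wordProd_append, cs.wordProd_append, cs.wordProd_singleton,
        cs.wordProd_reverse, hρ, htk]
      group
    have hword : π (ν ++ pal) = π ω := by
      rw [cs.wordProd_append, ← hν, htpal, mul_assoc, ht.mul_self, mul_one]
    have hcount : (ris (ν ++ pal)).count t
        = (ris ν).count t + (ris pal).count t := by
      rw [px_ris_append, List.count_append]
      congr 1
      have hconj : Function.Injective (fun x : W => (π pal)⁻¹ * x * π pal) := by
        intro x y hxy
        simpa using mul_left_cancel (mul_right_cancel hxy)
      have htt : t = (fun x : W => (π pal)⁻¹ * x * π pal) t := by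
        show t = (π pal)⁻¹ * t * π pal
        rw [htpal, ht.inv.symm]
        group
      nth_rw 1 [htt]
      rw [List.count_map_of_injective _ _ hconj]
    have hν_even : Even ((ris ν).count t) := by
      by_contra hne
      have hodd : Odd ((ris ν).count t) := Nat.not_even_iff_odd.mp hne
      have := px_odd_imp_lt cs ν hodd
      rw [← hν] at this
      rw [mul_assoc, ht.mul_self, mul_one] at this
      omega
    have hpal_odd : Odd ((ris pal).count t) := by
      have := px_count_palindrome_odd cs ρ k
      rwa [hρ, ← htk] at this
    have : Odd ((ris (ν ++ pal)).count t) := by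
      rw [hcount]
      rcases hν_even with ⟨a, ha⟩
      rcases hpal_odd with ⟨b, hb⟩
      exact ⟨a + b, by omega⟩
    have hfinal := px_count_ris_parity cs hword t
    rw [← Nat.not_even_iff_odd] at this ⊢
    exact fun he => this (hfinal.mpr he)
  · exact px_odd_imp_lt cs ω

end SignHom

/-- **Strong exchange property**. -/
theorem px_strong_exchange (ω : List B) {t : W} (ht : cs.IsReflection t)
    (h : ℓ (π ω * t) < ℓ (π ω)) :
    ∃ j < ω.length, π ω * t = π (ω.eraseIdx j) := by
  classical
  have hodd := (px_lt_iff_odd cs ω ht).mp h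
  have hmem : t ∈ ris ω := by
    rw [← List.count_pos_iff]
    rcases hodd with ⟨a, ha⟩
    omega
  obtain ⟨j, hj, hget⟩ := List.getElem_of_mem hmem
  refine ⟨j, by simpa using hj, ?_⟩
  have := cs.wordProd_mul_getD_rightInvSeq ω j
  rw [List.getD_eq_getElem _ _ hj, hget] at this
  exact this

/-! ### Part 2: the Bruhat order via chains, subword property, lifting -/

/-- One step in a Bruhat chain. -/
def pxCov (a b : W) : Prop :=
  ∃ t : W, cs.IsReflection t ∧ b = a * t ∧ ℓ a < ℓ b

/-- The Bruhat order, defined via chains of reflections increasing length. -/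
def pxLE : W → W → Prop := Relation.ReflTransGen (pxCov cs)

lemma px_cov_up (i : B) (y : W) (h : ℓ y < ℓ (s i * y)) : pxCov cs y (s i * y) := by
  refine ⟨y⁻¹ * s i * y, ⟨y⁻¹, i, by group⟩, by group, h⟩

lemma px_cov_down (i : B) (y : W) (h : ℓ (s i * y) < ℓ y) : pxCov cs (s i * y) y := by
  have h1 : y⁻¹ * s i * y = (s i * y)⁻¹ * y := by
    rw [mul_inv_rev, cs.inv_simple]
  refine ⟨y⁻¹ * s i * y, ⟨y⁻¹, i, by group⟩, by rw [h1]; group, h⟩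

lemma px_le_length {u w : W} (h : pxLE cs u w) : ℓ u ≤ ℓ w := by
  induction h with
  | refl => exact le_rfl
  | tail h1 h2 ih =>
    obtain ⟨t, _, _, hlen⟩ := h2
    omega

/-- Any word contains a reduced sublist with the same product. -/
lemma px_reduce_aux : ∀ n : ℕ, ∀ γ : List B, γ.length ≤ n →
    ∃ δ : List B, δ.Sublist γ ∧ cs.IsReduced δ ∧ π δ = π γ := by
  intro n
  induction n with
  | zero =>
    intro γ hγ
    have : γ = [] := List.eq_nil_of_length_eq_zero (by omega)
    subst this
    exact ⟨[], List.Sublist.refl _, by simp [CoxeterSystem.IsReduced], rfl⟩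
  | succ n ihn =>
    intro γ hγ
    by_cases hred : cs.IsReduced γ
    · exact ⟨γ, List.Sublist.refl _, hred, rfl⟩
    · classical
      have hex : ∃ k, ¬ cs.IsReduced (γ.take k) := ⟨γ.length, by rwa [List.take_length]⟩
      have hk0red : ¬ cs.IsReduced (γ.take (Nat.find hex)) := Nat.find_spec hex
      have hk0pos : Nat.find hex ≠ 0 := by
        intro h0
        rw [h0] at hk0red
        exact hk0red (by simp [CoxeterSystem.IsReduced])
      obtain ⟨k, hk⟩ : ∃ k, Nat.find hex = k + 1 := ⟨Nat.find hex - 1, by omega⟩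
      rw [hk] at hk0red
      have hkred : cs.IsReduced (γ.take k) := by
        by_contra hc
        exact (Nat.find_min hex (by omega)) hc
      have hklt' : k < γ.length := by
        by_contra hc
        push_neg at hc
        rw [List.take_of_length_le hc] at hkred
        exact hred hkred
      have htake : γ.take (k+1) = γ.take k ++ [γ[k]'hklt'] := by
        rw [List.take_succ, List.getElem?_eq_getElem hklt']
        rfl
      have hlen : (γ.take k).length = k := by
        rw [List.length_take]
        omega
      have hvlen : ℓ (π (γ.take k)) = k := by
        have : ℓ (π (γ.take k)) = (γ.take k).length := hkred
        omega
      have h1 : π (γ.take (k+1)) = π (γ.take k) * s (γ[k]'hklt') := by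
        rw [htake, cs.wordProd_append, cs.wordProd_singleton]
      have h2 : ℓ (π (γ.take (k+1))) ≠ k + 1 := by
        intro hc
        apply hk0red
        show ℓ (π (γ.take (k+1))) = (γ.take (k+1)).length
        rw [hc, List.length_take]
        omega
      have hlt : ℓ (π (γ.take k) * s (γ[k]'hklt')) < ℓ (π (γ.take k)) := by
        rcases cs.length_mul_simple (π (γ.take k)) (γ[k]'hklt') with hc | hc <;>
          rw [← h1] at * <;> omega
      obtain ⟨m, hm, heq⟩ := px_strong_exchange cs (γ.take k)
        (cs.isReflection_simple (γ[k]'hklt')) hlt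
      set γ' := (γ.take k).eraseIdx m ++ γ.drop (k+1) with hγ'
      have hπγ' : π γ' = π γ := by
        have e1 : π γ = π (γ.take (k+1)) * π (γ.drop (k+1)) := by
          rw [← cs.wordProd_append, List.take_append_drop]
        rw [hγ', cs.wordProd_append, ← heq, ← h1, ← e1]
      have hmlt : m < (γ.take k).length := by omega
      have hlen' : γ'.length ≤ n := by
        rw [hγ', List.length_append, List.length_eraseIdx, if_pos hmlt, hlen,
          List.length_drop]
        omega
      have hsubγ : γ'.Sublist γ := by
        have s1 : γ' <+ γ.take k ++ γ.drop (k+1) :=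
          (List.eraseIdx_sublist _ m).append (List.Sublist.refl _)
        have s2 : γ.take k ++ γ.drop (k+1) <+ γ := by
          nth_rw 3 [← List.take_append_drop k γ]
          apply List.Sublist.append (List.Sublist.refl _)
          rw [List.drop_eq_getElem_cons hklt']
          exact List.sublist_cons_self _ _
        exact s1.trans s2
      obtain ⟨δ, hs, hr, hp⟩ := ihn γ' hlen'
      exact ⟨δ, hs.trans hsubγ, hr, by rw [hp, hπγ']⟩

lemma px_reduce (γ : List B) :
    ∃ δ : List B, δ.Sublist γ ∧ cs.IsReduced δ ∧ π δ = π γ :=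
  px_reduce_aux cs γ.length γ le_rfl

/-- Chains go down to subwords of any reduced word. -/
lemma px_le_subword {u w : W} (h : pxLE cs u w) :
    ∀ ω : List B, cs.IsReduced ω → π ω = w →
      ∃ δ : List B, δ.Sublist ω ∧ cs.IsReduced δ ∧ π δ = u := by
  induction h with
  | refl =>
    intro ω hred hπ
    exact ⟨ω, List.Sublist.refl _, hred, hπ⟩
  | @tail b c h1 h2 ih =>
    intro ω hred hπ
    obtain ⟨t, ht, hc, hlen⟩ := h2
    have hb : b = π ω * t := by
      rw [hπ, hc, mul_assoc, ht.mul_self, mul_one]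
    have hlt : ℓ (π ω * t) < ℓ (π ω) := by
      rw [← hb, hπ]
      exact hc ▸ hlen
    obtain ⟨m, hm, heq⟩ := px_strong_exchange cs ω ht hlt
    obtain ⟨δ', hsub', hred', hπ'⟩ := px_reduce cs (ω.eraseIdx m)
    obtain ⟨δ, hsub, hredδ, hπδ⟩ := ih δ' hred' (by rw [hπ', ← heq, ← hb])
    exact ⟨δ, hsub.trans (hsub'.trans (List.eraseIdx_sublist _ _)), hredδ, hπδ⟩

/-- Resolving a covering step against a left descent. -/
lemma px_cov_resolve {y y' t : W} (ht : cs.IsReflection t) (hyt : y = y' * t)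
    (hadj : ℓ y' + 1 = ℓ y) (i : B) (hiy : ℓ (s i * y) < ℓ y) :
    y' = s i * y ∨ ℓ (s i * y') < ℓ y' := by
  obtain ⟨β, hβred, hβ⟩ := cs.exists_reduced_word' (s i * y)
  have hsiy : ℓ (s i * y) + 1 = ℓ y := by
    rcases cs.length_simple_mul y i with hc | hc <;> omega
  have hω : π (i :: β) = y := by
    rw [cs.wordProd_cons, ← hβ, cs.simple_mul_simple_cancel_left]
  have hβlen : β.length = ℓ (s i * y) := by
    have : ℓ (π β) = β.length := hβred
    rw [← hβ] at this
    omega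
  have hyy' : y * t = y' := by
    rw [hyt, mul_assoc, ht.mul_self, mul_one]
  have hlt : ℓ (π (i :: β) * t) < ℓ (π (i :: β)) := by
    rw [hω, hyy']
    omega
  obtain ⟨j, hj, heq⟩ := px_strong_exchange cs (i :: β) ht hlt
  have hy' : y' = π ((i :: β).eraseIdx j) := by
    rw [← heq, hω, hyy']
  cases j with
  | zero =>
    left
    rw [hy']
    show π β = s i * y
    exact hβ.symm
  | succ m =>
    right
    have he : (i :: β).eraseIdx (m + 1) = i :: β.eraseIdx m := rfl
    rw [he, cs.wordProd_cons] at hy'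
    have hsy' : s i * y' = π (β.eraseIdx m) := by
      rw [hy', cs.simple_mul_simple_cancel_left]
    have hb1 : ℓ (s i * y') ≤ (β.eraseIdx m).length := by
      rw [hsy']
      exact cs.length_wordProd_le _
    have hmβ : m < β.length := by
      simp only [List.length_cons] at hj
      omega
    rw [List.length_eraseIdx, if_pos hmβ] at hb1
    omega

/-- The combined lifting properties, by strong induction on the length of the
larger element. -/
lemma px_AZ : ∀ n : ℕ, ∀ i : B, ∀ x y : W, ℓ y ≤ n →
    (pxLE cs x y → ℓ x < ℓ (s i * x) → ℓ y < ℓ (s i * y) →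
      pxLE cs (s i * x) (s i * y)) ∧
    (pxLE cs x y → ℓ x < ℓ (s i * x) → ℓ (s i * y) < ℓ y →
      pxLE cs x (s i * y) ∧ pxLE cs (s i * x) y) := by
  intro n
  induction n using Nat.strong_induction_on with
  | _ n ih =>
  intro i x y hy
  constructor
  · intro hxy hx hsy
    rcases hxy.cases_tail with heq | ⟨y', hxy', hcov⟩
    · subst heq
      exact Relation.ReflTransGen.refl
    · obtain ⟨t, ht, hyt, hlt⟩ := hcov
      by_cases hsy' : ℓ y' < ℓ (s i * y')
      · have h1 := (ih (ℓ y') (lt_of_lt_of_le hlt hy) i x y' le_rfl).1 hxy' hx hsy'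
        have hstep : pxCov cs (s i * y') (s i * y) := by
          refine ⟨t, ht, by rw [hyt, mul_assoc], ?_⟩
          rcases cs.length_simple_mul y' i with hc | hc <;>
            rcases cs.length_simple_mul y i with hd | hd <;> omega
        exact h1.tail hstep
      · have hsy'' : ℓ (s i * y') < ℓ y' := by
          have := cs.length_simple_mul_ne y' i
          omega
        have h2 := ((ih (ℓ y') (lt_of_lt_of_le hlt hy) i x y' le_rfl).2 hxy' hx hsy'').2
        have c1 : pxCov cs y' y := ⟨t, ht, hyt, hlt⟩
        have c2 : pxCov cs y (s i * y) := px_cov_up cs i y hsy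
        exact (h2.tail c1).tail c2
  · intro hxy hx hsy
    rcases hxy.cases_tail with heq | ⟨y', hxy', hcov⟩
    · subst heq
      omega
    · obtain ⟨t, ht, hyt, hlt⟩ := hcov
      by_cases hsy' : ℓ (s i * y') < ℓ y'
      · obtain ⟨g1, g2⟩ := (ih (ℓ y') (lt_of_lt_of_le hlt hy) i x y' le_rfl).2 hxy' hx hsy'
        constructor
        · have hstep : pxCov cs (s i * y') (s i * y) := by
            refine ⟨t, ht, by rw [hyt, mul_assoc], ?_⟩
            rcases cs.length_simple_mul y' i with hc | hc <;>
              rcases cs.length_simple_mul y i with hd | hd <;> omega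
          exact g1.tail hstep
        · exact g2.tail ⟨t, ht, hyt, hlt⟩
      · have hsy'2 : ℓ y' < ℓ (s i * y') := by
          have := cs.length_simple_mul_ne y' i
          omega
        have hpar : ℓ y' % 2 ≠ ℓ y % 2 := by
          have hodd := ht.odd_length
          have hmod := cs.length_mul_mod_two y' t
          rw [← hyt] at hmod
          rcases hodd with ⟨c, hc⟩
          omega
        rcases (by omega : ℓ y' + 1 = ℓ y ∨ ℓ y' + 3 ≤ ℓ y) with hadj | hfar
        · rcases px_cov_resolve cs ht hyt hadj i hsy with hyeq | hcontra
          · constructor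
            · rw [← hyeq]
              exact hxy'
            · have g := (ih (ℓ y') (by omega) i x y' le_rfl).1 hxy' hx hsy'2
              rw [hyeq, cs.simple_mul_simple_cancel_left] at g
              exact g
          · omega
        · have c2 : pxCov cs (s i * y') (s i * y) := by
            refine ⟨t, ht, by rw [hyt, mul_assoc], ?_⟩
            rcases cs.length_simple_mul y' i with hc | hc <;>
              rcases cs.length_simple_mul y i with hd | hd <;> omega
          constructor
          · have c1 : pxCov cs y' (s i * y') := px_cov_up cs i y' hsy'2
            exact (hxy'.tail c1).tail c2
          · have g := (ih (ℓ y') (by omega) i x y' le_rfl).1 hxy' hx hsy'2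
            have c3 : pxCov cs (s i * y) y := px_cov_down cs i y hsy
            exact (g.tail c2).tail c3

/-- Lifting, part A: monotonicity of multiplication by a simple reflection. -/
lemma px_A (i : B) {x y : W} (hxy : pxLE cs x y) (hx : ℓ x < ℓ (s i * x))
    (hy : ℓ y < ℓ (s i * y)) : pxLE cs (s i * x) (s i * y) :=
  (px_AZ cs (ℓ y) i x y le_rfl).1 hxy hx hy

/-- Lifting, part Z. -/
lemma px_Z (i : B) {x y : W} (hxy : pxLE cs x y) (hx : ℓ x < ℓ (s i * x))
    (hy : ℓ (s i * y) < ℓ y) : pxLE cs x (s i * y) ∧ pxLE cs (s i * x) y :=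
  (px_AZ cs (ℓ y) i x y le_rfl).2 hxy hx hy

/-- The subword property: a reduced sublist of a reduced word gives a Bruhat relation. -/
lemma px_subword_le : ∀ ω : List B, cs.IsReduced ω → ∀ ω' : List B,
    ω'.Sublist ω → cs.IsReduced ω' → pxLE cs (π ω') (π ω) := by
  intro ω
  induction ω with
  | nil =>
    intro _ ω' hsub _
    rw [List.sublist_nil.mp hsub]
    exact Relation.ReflTransGen.refl
  | cons i α ihα =>
    intro hred ω' hsub hred'
    have hαred : cs.IsReduced α := by
      have := CoxeterSystem.IsReduced.drop hred 1
      simpa using this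
    have hy : ℓ (π α) < ℓ (s i * π α) := by
      have e1 : ℓ (π (i :: α)) = (i :: α).length := hred
      have e2 : ℓ (π α) = α.length := hαred
      rw [cs.wordProd_cons] at e1
      simp only [List.length_cons] at e1
      omega
    rcases List.sublist_cons_iff.mp hsub with hsubα | ⟨r, rfl, hrsub⟩
    · have h1 := ihα hαred ω' hsubα hred'
      have c : pxCov cs (π α) (π (i :: α)) := by
        rw [cs.wordProd_cons]
        exact px_cov_up cs i (π α) hy
      exact h1.tail c
    · have hrred : cs.IsReduced r := by
        have := CoxeterSystem.IsReduced.drop hred' 1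
        simpa using this
      have h1 := ihα hαred r hrsub hrred
      have hx : ℓ (π r) < ℓ (s i * π r) := by
        have e1 : ℓ (π (i :: r)) = (i :: r).length := hred'
        have e2 : ℓ (π r) = r.length := hrred
        rw [cs.wordProd_cons] at e1
        simp only [List.length_cons] at e1
        omega
      have := px_A cs i h1 hx hy
      rw [cs.wordProd_cons, cs.wordProd_cons]
      exact this

/-- The main auxiliary induction: if `x` and `y` are both below `w` in the right weak
order and `x ≤ y` in Bruhat order, then `w⁻¹ y ≤ w⁻¹ x` in Bruhat order. -/
lemma px_main : ∀ n : ℕ, ∀ w x y : W, ℓ y ≤ n →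
    ℓ w = ℓ x + ℓ (x⁻¹ * w) → ℓ w = ℓ y + ℓ (y⁻¹ * w) → pxLE cs x y →
    pxLE cs (w⁻¹ * y) (w⁻¹ * x) := by
  intro n
  induction n using Nat.strong_induction_on with
  | _ n ih =>
  intro w x y hyn hxw hyw hxy
  by_cases hy1 : y = 1
  · subst hy1
    have hxle := px_le_length cs hxy
    rw [cs.length_one] at hxle
    have hx0 : x = 1 := cs.length_eq_zero_iff.mp (by omega)
    rw [hx0]
    exact Relation.ReflTransGen.refl
  · obtain ⟨i, hiy⟩ := cs.exists_leftDescent_of_ne_one hy1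
    have hiy' : ℓ (s i * y) < ℓ y := hiy
    have hsy : ℓ (s i * y) + 1 = ℓ y := by
      rcases cs.length_simple_mul y i with hc | hc <;> omega
    obtain ⟨βy, hβyred, hβy⟩ := cs.exists_reduced_word' (s i * y)
    obtain ⟨γ, hγred, hγ⟩ := cs.exists_reduced_word' (y⁻¹ * w)
    have hβylen : βy.length = ℓ (s i * y) := by
      have h0 : ℓ (π βy) = βy.length := hβyred
      rw [← hβy] at h0
      omega
    have hγlen : γ.length = ℓ (y⁻¹ * w) := by
      have h0 : ℓ (π γ) = γ.length := hγred
      rw [← hγ] at h0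
      omega
    have hsw : ℓ (s i * w) + 1 = ℓ w := by
      have hswe : π (βy ++ γ) = s i * w := by
        rw [cs.wordProd_append, ← hβy, ← hγ]
        group
      have hup : ℓ (s i * w) ≤ βy.length + γ.length := by
        rw [← hswe]
        have := cs.length_wordProd_le (βy ++ γ)
        simpa [List.length_append] using this
      rcases cs.length_simple_mul w i with hc | hc <;> omega
    have hyw' : ℓ (s i * w) = ℓ (s i * y) + ℓ ((s i * y)⁻¹ * (s i * w)) := by
      have e : (s i * y)⁻¹ * (s i * w) = y⁻¹ * w := by
        rw [mul_inv_rev, cs.inv_simple, mul_assoc, cs.simple_mul_simple_cancel_left]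
      rw [e]
      omega
    have ecancel : ∀ z : W, (s i * w)⁻¹ * (s i * z) = w⁻¹ * z := by
      intro z
      rw [mul_inv_rev, cs.inv_simple, mul_assoc, cs.simple_mul_simple_cancel_left]
    by_cases hx1 : ℓ (s i * x) < ℓ x
    · have hsx : ℓ (s i * x) + 1 = ℓ x := by
        rcases cs.length_simple_mul x i with hc | hc <;> omega
      have hxw' : ℓ (s i * w) = ℓ (s i * x) + ℓ ((s i * x)⁻¹ * (s i * w)) := by
        have e : (s i * x)⁻¹ * (s i * w) = x⁻¹ * w := by
          rw [mul_inv_rev, cs.inv_simple, mul_assoc, cs.simple_mul_simple_cancel_left]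
        rw [e]
        omega
      have hxx : ℓ (s i * x) < ℓ (s i * (s i * x)) := by
        rw [cs.simple_mul_simple_cancel_left]
        exact hx1
      have hste : pxLE cs (s i * x) y :=
        Relation.ReflTransGen.head (px_cov_down cs i x hx1) hxy
      have hxy' : pxLE cs (s i * x) (s i * y) := (px_Z cs i hste hxx hiy').1
      have hmain := ih (ℓ (s i * y)) (by omega) (s i * w) (s i * x) (s i * y)
        le_rfl hxw' hyw' hxy'
      rw [ecancel y, ecancel x] at hmain
      exact hmain
    · have hx2 : ℓ x < ℓ (s i * x) := by
        have := cs.length_simple_mul_ne x i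
        omega
      have hxy' : pxLE cs x (s i * y) := (px_Z cs i hxy hx2 hiy').1
      obtain ⟨ρ, hρred, hρ⟩ := cs.exists_reduced_word' x
      obtain ⟨τ, hτred, hτ⟩ := cs.exists_reduced_word' (x⁻¹ * w)
      have hρlen : ρ.length = ℓ x := by
        have h0 : ℓ (π ρ) = ρ.length := hρred
        rw [← hρ] at h0
        omega
      have hτlen : τ.length = ℓ (x⁻¹ * w) := by
        have h0 : ℓ (π τ) = τ.length := hτred
        rw [← hτ] at h0
        omega
      have hrev : π (τ.reverse ++ ρ.reverse) = w⁻¹ := by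
        rw [cs.wordProd_append, cs.wordProd_reverse, cs.wordProd_reverse, ← hρ, ← hτ]
        group
      have hlt : ℓ (π (τ.reverse ++ ρ.reverse) * s i) < ℓ (π (τ.reverse ++ ρ.reverse)) := by
        rw [hrev]
        have e : w⁻¹ * s i = (s i * w)⁻¹ := by
          rw [mul_inv_rev, cs.inv_simple]
        rw [e, cs.length_inv, cs.length_inv]
        omega
      obtain ⟨j, hj, heq⟩ := px_strong_exchange cs (τ.reverse ++ ρ.reverse)
        (cs.isReflection_simple i) hlt
      rw [hrev] at heq
      by_cases hjτ : j < τ.reverse.length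
      · rw [List.eraseIdx_append_of_lt_length hjτ] at heq
        set ε := τ.reverse.eraseIdx j with hε
        have hπε : π ε = w⁻¹ * s i * x := by
          rw [cs.wordProd_append, cs.wordProd_reverse, ← hρ] at heq
          rw [heq]
          group
        have hεlen : ε.length + 1 = ℓ (x⁻¹ * w) := by
          rw [hε, List.length_eraseIdx, if_pos hjτ, List.length_reverse]
          rw [List.length_reverse] at hjτ
          omega
        have e4 : (w⁻¹ * s i * x)⁻¹ = x⁻¹ * (s i * w) := by
          rw [mul_inv_rev, mul_inv_rev, inv_inv, cs.inv_simple]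
        have hgelen : ℓ (x⁻¹ * (s i * w)) = ε.length := by
          have hle : ℓ (x⁻¹ * (s i * w)) ≤ ε.length := by
            have e3 : x⁻¹ * (s i * w) = π ε.reverse := by
              rw [cs.wordProd_reverse, hπε, e4]
            rw [e3]
            have := cs.length_wordProd_le ε.reverse
            simpa using this
          have hge : ℓ (s i * w) - ℓ x ≤ ℓ (x⁻¹ * (s i * w)) := by
            have := cs.length_mul_ge_length_sub_length' x⁻¹ (s i * w)
            rwa [cs.length_inv] at this
          omega
        have hxw'' : ℓ (s i * w) = ℓ x + ℓ (x⁻¹ * (s i * w)) := by omega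
        have hmain := ih (ℓ (s i * y)) (by omega) (s i * w) x (s i * y)
          le_rfl hxw'' hyw' hxy'
        rw [ecancel y] at hmain
        have e2 : (s i * w)⁻¹ * x = w⁻¹ * (s i * x) := by
          rw [mul_inv_rev, cs.inv_simple]
          group
        rw [e2] at hmain
        have hεred : cs.IsReduced ε := by
          show ℓ (π ε) = ε.length
          rw [hπε]
          have : ℓ (w⁻¹ * s i * x) = ℓ (x⁻¹ * (s i * w)) := by
            rw [← e4, cs.length_inv]
          omega
        have hτrevred : cs.IsReduced τ.reverse := (cs.isReduced_reverse_iff τ).mpr hτred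
        have hfin : pxLE cs (π ε) (π τ.reverse) :=
          px_subword_le cs τ.reverse hτrevred ε (List.eraseIdx_sublist _ _) hεred
        have e5 : π τ.reverse = w⁻¹ * x := by
          rw [cs.wordProd_reverse, ← hτ]
          group
        have e6 : π ε = w⁻¹ * (s i * x) := by
          rw [hπε]
          group
        rw [e5, e6] at hfin
        exact hmain.trans hfin
      · push_neg at hjτ
        rw [List.eraseIdx_append_of_length_le hjτ] at heq
        exfalso
        rw [cs.wordProd_append, cs.wordProd_reverse, ← hτ] at heq
        have hxsi : x⁻¹ * s i = π (ρ.reverse.eraseIdx (j - τ.reverse.length)) := by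
          have h5 : (x⁻¹ * w) * (w⁻¹ * s i) = x⁻¹ * s i := by group
          rw [heq, mul_inv_cancel_left] at h5
          exact h5.symm
        have hjρ : j - τ.reverse.length < ρ.reverse.length := by
          simp only [List.length_append] at hj
          omega
        have hlen2 : (ρ.reverse.eraseIdx (j - τ.reverse.length)).length
            = ρ.length - 1 := by
          rw [List.length_eraseIdx, if_pos hjρ, List.length_reverse]
        have hb : ℓ (x⁻¹ * s i) ≤ ρ.length - 1 := by
          rw [hxsi, ← hlen2]
          exact cs.length_wordProd_le _
        have e7 : ℓ (x⁻¹ * s i) = ℓ (s i * x) := by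
          have e8 : (s i * x)⁻¹ = x⁻¹ * s i := by
            rw [mul_inv_rev, cs.inv_simple]
          rw [← e8, cs.length_inv]
        omega

/-- The `BruhatLE` of this file agrees with the chain order `pxLE`. -/
lemma px_bruhat_iff (a b : W) : BruhatLE cs a b ↔ pxLE cs a b := by
  constructor
  · rintro ⟨ω, h1, h2, ω', h3, h4, h5⟩
    rw [← h2, ← h5]
    exact px_subword_le cs ω h1 ω' h3 h4
  · intro h
    obtain ⟨δ, hsub, hred, hπ⟩ := px_le_subword cs h (rword cs b) (rword_isReduced cs b)
      (rword_wordProd cs b)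
    exact ⟨rword cs b, rword_isReduced cs b, rword_wordProd cs b, δ, hsub, hred, hπ⟩

end PXDevelopment

/-- If `x ≤_R u⁻¹`, `y ≤_R u⁻¹` and `x ≤ y` (strong Bruhat order), then `ux ≥ uy`. -/
theorem stmt10 [Finite W] (u x y : W) (hx : RWeakLE cs x u⁻¹) (hy : RWeakLE cs y u⁻¹)
    (hxy : BruhatLE cs x y) : BruhatLE cs (u * y) (u * x) := by
  have hx' : cs.length u⁻¹ = cs.length x + cs.length (x⁻¹ * u⁻¹) := hx
  have hy' : cs.length u⁻¹ = cs.length y + cs.length (y⁻¹ * u⁻¹) := hy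
  have h := px_main cs (cs.length y) u⁻¹ x y le_rfl hx' hy'
    ((px_bruhat_iff cs x y).mp hxy)
  rw [inv_inv] at h
  exact (px_bruhat_iff cs (u * y) (u * x)).mpr h

end PaperBase
end

section
/- (Mixed meet property.) Let W be a finite Coxeter group and let u, w ∈ W. Then the set { x ∈ W : x ≤_R u and x ≤ w } has a unique maximal element m with respect to the strong Bruhat order; that is, m ≤_R u, m ≤ w, and every z ∈ W with z ≤_R u and z ≤ w satisfies z ≤ m. Moreover m = u (u⁻¹ ↓ U_w). -/
set_option linter.unusedSectionVars false
set_option linter.unusedVariables false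


open Polynomial

namespace PaperBase

variable {B : Type*} {W : Type*} [Group W] {M : CoxeterMatrix B} (cs : CoxeterSystem M W)

open List

open Classical in
/-- count of `t` in a list of group elements -/
noncomputable def cnt (t : W) (l : List W) : ℕ := (l.filter (fun x => x = t)).length

@[simp] theorem cnt_nil (t : W) : cnt t ([] : List W) = 0 := by simp [cnt]

open Classical in
theorem cnt_cons (t a : W) (l : List W) :
    cnt t (a :: l) = cnt t l + (if a = t then 1 else 0) := by
  simp only [cnt, filter_cons]
  by_cases h : a = t <;> simp [h]

theorem cnt_append (t : W) (l₁ l₂ : List W) :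
    cnt t (l₁ ++ l₂) = cnt t l₁ + cnt t l₂ := by
  classical simp [cnt, filter_append]

theorem cnt_eq_zero_of_not_mem {t : W} {l : List W} (h : t ∉ l) : cnt t l = 0 := by
  classical
  simp only [cnt, length_eq_zero_iff, filter_eq_nil_iff]
  intro a ha
  simp only [decide_eq_true_eq]
  rintro rfl; exact h ha

theorem mem_of_cnt_ne_zero {t : W} {l : List W} (h : cnt t l ≠ 0) : t ∈ l := by
  by_contra hc
  exact h (cnt_eq_zero_of_not_mem hc)

theorem cnt_eq_one_of_nodup_mem {t : W} {l : List W} (hn : l.Nodup) (h : t ∈ l) :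
    cnt t l = 1 := by
  classical
  induction l with
  | nil => simp at h
  | cons a l ih =>
    rw [cnt_cons]
    rcases List.mem_cons.mp h with rfl | hm
    · rw [if_pos rfl, cnt_eq_zero_of_not_mem (List.nodup_cons.mp hn).1]
    · rw [ih (List.nodup_cons.mp hn).2 hm, if_neg ?_]
      rintro rfl
      exact (List.nodup_cons.mp hn).1 hm

open Classical in
/-- The basic signed conjugation map. -/
noncomputable def esgnFun (i : B) : W × ℤˣ → W × ℤˣ :=
  fun p => (cs.simple i * p.1 * cs.simple i, if p.1 = cs.simple i then -p.2 else p.2)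

theorem esgnFun_involutive (i : B) : Function.Involutive (esgnFun cs i) := by
  classical
  rintro ⟨x, ε⟩
  have hsq : ∀ y : W, cs.simple i * (cs.simple i * y * cs.simple i) * cs.simple i = y := by
    intro y
    rw [← mul_assoc, ← mul_assoc, cs.simple_mul_simple_self, one_mul, mul_assoc,
      cs.simple_mul_simple_self, mul_one]
  by_cases h : x = cs.simple i
  · simp [esgnFun, h, cs.simple_mul_simple_self]
  · have h2 : cs.simple i * x * cs.simple i ≠ cs.simple i := by
      intro hc
      apply h
      have := congrArg (fun y => cs.simple i * y * cs.simple i) hc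
      simpa [hsq, cs.simple_mul_simple_self] using this
    simp [esgnFun, h, h2, hsq x]

/-- The signed conjugation permutation attached to a simple generator. -/
noncomputable def esgn (i : B) : Equiv.Perm (W × ℤˣ) := (esgnFun_involutive cs i).toPerm

theorem esgn_apply (i : B) (x : W × ℤˣ) : esgn cs i x = esgnFun cs i x := rfl

theorem prod_esgn_apply (χ : List B) (x : W × ℤˣ) :
    (χ.map (esgn cs)).prod x =
      (cs.wordProd χ * x.1 * (cs.wordProd χ)⁻¹,
        x.2 * (-1 : ℤˣ) ^ (cnt x.1 (cs.rightInvSeq χ))) := by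
  classical
  induction χ generalizing x with
  | nil => simp [CoxeterSystem.rightInvSeq]
  | cons i χ ih =>
    have hris : cs.rightInvSeq (i :: χ) =
        ((cs.wordProd χ)⁻¹ * cs.simple i * cs.wordProd χ) :: cs.rightInvSeq χ := rfl
    rw [map_cons, prod_cons, Equiv.Perm.mul_apply, ih, esgn_apply]
    rcases x with ⟨t, ε⟩
    simp only [esgnFun, hris, cnt_cons, cs.wordProd_cons, Prod.mk.injEq]
    have hcond : (cs.wordProd χ * t * (cs.wordProd χ)⁻¹ = cs.simple i)
        ↔ ((cs.wordProd χ)⁻¹ * cs.simple i * cs.wordProd χ = t) := by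
      constructor
      · intro h; rw [← h]; group
      · intro h; rw [← h]; group
    constructor
    · rw [mul_inv_rev, cs.inv_simple]
      group
    · by_cases h : cs.wordProd χ * t * (cs.wordProd χ)⁻¹ = cs.simple i
      · rw [if_pos h, if_pos (hcond.mp h), pow_add, pow_one, ← mul_assoc, mul_neg_one]
      · rw [if_neg h, if_neg (fun hh => h (hcond.mpr hh)), add_zero]


theorem drop_alternatingWord (i i' : B) (j m : ℕ) :
    List.drop j (CoxeterSystem.alternatingWord i i' m)
      = CoxeterSystem.alternatingWord i i' (m - j) := by
  induction j generalizing m with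
  | zero => simp
  | succ j ih =>
    cases m with
    | zero => simp [CoxeterSystem.alternatingWord]
    | succ m =>
      rw [CoxeterSystem.alternatingWord_succ', List.drop_succ_cons, ih m]
      congr 1
      omega

theorem getElem?_alternatingWord (i i' : B) (m k : ℕ) (hk : k < m) :
    (CoxeterSystem.alternatingWord i i' m)[k]? =
      some (if Even (m - k - 1) then i' else i) := by
  have h0 : (CoxeterSystem.alternatingWord i i' m)[k]?
      = (List.drop k (CoxeterSystem.alternatingWord i i' m))[0]? := by
    rw [List.getElem?_drop, Nat.add_zero]
  rw [h0, drop_alternatingWord]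
  obtain ⟨n, hn⟩ : ∃ n, m - k = n + 1 := ⟨m - k - 1, by omega⟩
  rw [hn, CoxeterSystem.alternatingWord_succ']
  simp [List.getElem?_cons_zero, Nat.add_sub_cancel]

section DihedralAlgebra

variable {G : Type*} [Group G] {a b : G}

private theorem dih_swap_b (ha : a * a = 1) (hb : b * b = 1) (n : ℕ) :
    b * (a * b) ^ n = ((a * b) ^ n)⁻¹ * b := by
  have hba : (a * b) * (b * a) = 1 := by
    rw [mul_assoc, ← mul_assoc b b, hb, one_mul, ha]
  have hbc : b * (a * b) = (a * b)⁻¹ * b := by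
    rw [inv_eq_of_mul_eq_one_right hba, mul_assoc]
  induction n with
  | zero => simp
  | succ n ih =>
    rw [pow_succ, ← mul_assoc, ih, mul_assoc, hbc, ← mul_assoc, ← mul_inv_rev]
    rw [← pow_succ', ← pow_succ]

private theorem dih_swap_a (ha : a * a = 1) (hb : b * b = 1) (n : ℕ) :
    a * ((a * b) ^ n)⁻¹ = (a * b) ^ n * a := by
  have hba : (a * b) * (b * a) = 1 := by
    rw [mul_assoc, ← mul_assoc b b, hb, one_mul, ha]
  have hinv : (a * b)⁻¹ = b * a := inv_eq_of_mul_eq_one_right hba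
  have hac : a * (a * b)⁻¹ = (a * b) * a := by
    rw [hinv, ← mul_assoc]
  induction n with
  | zero => simp
  | succ n ih =>
    rw [pow_succ, mul_inv_rev, ← mul_assoc, hac, mul_assoc, ih, ← mul_assoc]
    rw [← pow_succ', ← pow_succ]

private theorem dih_even (ha : a * a = 1) (hb : b * b = 1) (q : ℕ) :
    ((a * b) ^ q)⁻¹ * b * (a * b) ^ q = ((a * b) ^ (q + q))⁻¹ * b := by
  rw [mul_assoc, dih_swap_b ha hb, ← mul_assoc, ← mul_inv_rev, ← pow_add]

private theorem dih_odd (ha : a * a = 1) (hb : b * b = 1) (q : ℕ) :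
    (b * (a * b) ^ q)⁻¹ * a * (b * (a * b) ^ q) = ((a * b) ^ (q + q + 1))⁻¹ * b := by
  have hbinv : b⁻¹ = b := inv_eq_of_mul_eq_one_left hb
  have hba : (a * b) * (b * a) = 1 := by
    rw [mul_assoc, ← mul_assoc b b, hb, one_mul, ha]
  have hbc : b * (a * b) = (a * b)⁻¹ * b := by
    rw [inv_eq_of_mul_eq_one_right hba, mul_assoc]
  rw [mul_inv_rev, hbinv]
  simp only [mul_assoc]
  rw [dih_swap_b ha hb q]
  rw [← mul_assoc a]
  rw [dih_swap_a ha hb q]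
  simp only [mul_assoc]
  rw [← mul_assoc b ((a * b) ^ q)]
  rw [dih_swap_b ha hb q]
  simp only [mul_assoc]
  rw [hbc]
  simp only [← mul_assoc]
  rw [← mul_inv_rev, ← mul_inv_rev]
  congr 1
  rw [← pow_add, ← pow_succ']

end DihedralAlgebra

theorem ris_alternatingWord_getD (i i' : B) (N k : ℕ) (hk : k < 2 * N) :
    (cs.rightInvSeq (CoxeterSystem.alternatingWord i i' (2 * N))).getD k 1
      = ((cs.simple i * cs.simple i') ^ (2 * N - (k + 1)))⁻¹ * cs.simple i' := by
  have ha := cs.simple_mul_simple_self i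
  have hb := cs.simple_mul_simple_self i'
  rw [cs.getD_rightInvSeq, drop_alternatingWord]
  rw [getElem?_alternatingWord i i' _ k (by omega)]
  simp only [Option.map_some, Option.getD_some]
  rw [cs.prod_alternatingWord_eq_mul_pow, apply_ite cs.simple]
  set L := 2 * N - (k + 1) with hL
  have hL' : 2 * N - k - 1 = L := by omega
  rw [hL']
  by_cases hpar : Even L
  · obtain ⟨q, hq⟩ := hpar
    have hq2 : L / 2 = q := by omega
    rw [if_pos ⟨q, hq⟩, if_pos ⟨q, hq⟩, hq2, one_mul, hq]
    exact dih_even ha hb q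
  · obtain ⟨q, hq⟩ : ∃ q, L = q + q + 1 := by
      rcases Nat.even_or_odd L with h | h
      · exact absurd h hpar
      · obtain ⟨q, hq⟩ := h; exact ⟨q, by omega⟩
    have hq2 : L / 2 = q := by omega
    rw [if_neg hpar, if_neg hpar, hq2, hq]
    exact dih_odd ha hb q

theorem ris_alternatingWord_eq_map (i i' : B) (N : ℕ)
    (hN : (cs.simple i * cs.simple i') ^ N = 1) :
    cs.rightInvSeq (CoxeterSystem.alternatingWord i i' (2 * N))
      = (List.range (2 * N)).map
          (fun k => (cs.simple i * cs.simple i') ^ (k + 1) * cs.simple i') := by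
  have h2N : (cs.simple i * cs.simple i') ^ (2 * N) = 1 := by
    rw [two_mul, pow_add, hN, one_mul]
  apply List.ext_getElem
  · simp [CoxeterSystem.length_alternatingWord]
  · intro k h1 h2
    have hk : k < 2 * N := by
      simpa [CoxeterSystem.length_alternatingWord] using h1
    rw [← List.getD_eq_getElem _ 1 h1, ris_alternatingWord_getD cs i i' N k hk]
    rw [List.getElem_map, List.getElem_range]
    congr 1
    have hmul : (cs.simple i * cs.simple i') ^ (2 * N - (k + 1))
        * (cs.simple i * cs.simple i') ^ (k + 1) = 1 := by
      rw [← pow_add, (by omega : 2 * N - (k + 1) + (k + 1) = 2 * N), h2N]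
    exact inv_eq_of_mul_eq_one_right hmul
theorem esgn_pow_eq_prod (i i' : B) (N : ℕ) :
    (esgn cs i * esgn cs i') ^ N
      = ((CoxeterSystem.alternatingWord i i' (2 * N)).map (esgn cs)).prod := by
  induction N with
  | zero => simp [CoxeterSystem.alternatingWord]
  | succ N ih =>
    have h1 : 2 * (N + 1) = (2 * N + 1) + 1 := by omega
    rw [h1, CoxeterSystem.alternatingWord_succ', CoxeterSystem.alternatingWord_succ']
    have e1 : ¬ Even (2 * N + 1) := by simp [Nat.even_add_one, Nat.even_mul]
    have e2 : Even (2 * N) := ⟨N, by omega⟩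
    rw [if_neg e1, if_pos e2]
    rw [List.map_cons, List.map_cons, List.prod_cons, List.prod_cons, ← ih]
    rw [pow_succ', mul_assoc]

theorem esgn_liftable : M.IsLiftable (esgn cs) := by
  intro i i'
  rw [esgn_pow_eq_prod cs i i' (M i i')]
  apply Equiv.ext
  rintro ⟨t, ε⟩
  rw [prod_esgn_apply]
  have hπ : cs.wordProd (CoxeterSystem.alternatingWord i i' (2 * M i i')) = 1 := by
    rw [cs.prod_alternatingWord_eq_mul_pow]
    rw [if_pos ⟨M i i', by omega⟩]
    rw [one_mul, (by omega : 2 * M i i' / 2 = M i i'), cs.simple_mul_simple_pow]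
  have hcnt : ∀ x : W, Even (cnt x (cs.rightInvSeq
      (CoxeterSystem.alternatingWord i i' (2 * M i i')))) := by
    intro x
    rw [ris_alternatingWord_eq_map cs i i' (M i i') (cs.simple_mul_simple_pow i i')]
    rw [two_mul, List.range_add, List.map_append, cnt_append, List.map_map]
    have hmapeq : (List.range (M i i')).map
          ((fun k => (cs.simple i * cs.simple i') ^ (k + 1) * cs.simple i')
            ∘ (fun k => M i i' + k))
        = (List.range (M i i')).map
          (fun k => (cs.simple i * cs.simple i') ^ (k + 1) * cs.simple i') := by
      apply List.map_congr_left
      intro k _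
      simp only [Function.comp_apply]
      congr 1
      rw [(by omega : M i i' + k + 1 = M i i' + (k + 1)), pow_add,
        cs.simple_mul_simple_pow, one_mul]
    rw [hmapeq]
    exact ⟨_, rfl⟩
  obtain ⟨c, hc⟩ := hcnt t
  rw [hπ, hc, ← two_mul, pow_mul, Int.units_sq, one_pow, mul_one]
  simp

/-- The sign homomorphism into permutations of `W × ℤˣ`. -/
noncomputable def Phi : W →* Equiv.Perm (W × ℤˣ) := cs.lift ⟨esgn cs, esgn_liftable cs⟩

theorem Phi_wordProd (χ : List B) : Phi cs (cs.wordProd χ) = ((χ.map (esgn cs))).prod := by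
  unfold CoxeterSystem.wordProd
  rw [MonoidHom.map_list_prod, List.map_map]
  congr 1
  apply List.map_congr_left
  intro i _
  simp only [Function.comp_apply]
  exact cs.lift_apply_simple (esgn_liftable cs) i

theorem Phi_apply_word (χ : List B) (x : W × ℤˣ) :
    Phi cs (cs.wordProd χ) x =
      (cs.wordProd χ * x.1 * (cs.wordProd χ)⁻¹,
        x.2 * (-1 : ℤˣ) ^ (cnt x.1 (cs.rightInvSeq χ))) := by
  rw [Phi_wordProd, prod_esgn_apply]

theorem Phi_apply (w : W) (x : W × ℤˣ) :
    Phi cs w x = (w * x.1 * w⁻¹,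
        x.2 * (-1 : ℤˣ) ^ (cnt x.1 (cs.rightInvSeq (rword cs w)))) := by
  have h := Phi_apply_word cs (rword cs w) x
  rwa [rword_wordProd cs w] at h

theorem Phi_apply_word' (χ : List B) (u : W) (ε : ℤˣ) :
    Phi cs (cs.wordProd χ) (u, ε) =
      (cs.wordProd χ * u * (cs.wordProd χ)⁻¹,
        ε * (-1 : ℤˣ) ^ (cnt u (cs.rightInvSeq χ))) := by
  rw [Phi_apply_word]

theorem Phi_apply' (w u : W) (ε : ℤˣ) :
    Phi cs w (u, ε) = (w * u * w⁻¹,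
        ε * (-1 : ℤˣ) ^ (cnt u (cs.rightInvSeq (rword cs w)))) := by
  rw [Phi_apply]

theorem Phi_reflection_self {t : W} (ht : cs.IsReflection t) : Phi cs t (t, 1) = (t, -1) := by
  obtain ⟨v, i, ht_eq⟩ := ht
  have hmul : Phi cs t = Phi cs v * Phi cs (cs.simple i) * Phi cs v⁻¹ := by
    rw [ht_eq, map_mul, map_mul]
  have hvt : v⁻¹ * t * v = cs.simple i := by rw [ht_eq]; group
  -- apply Phi v⁻¹ to (t, 1)
  obtain ⟨d, hd⟩ : ∃ d : ℤˣ, Phi cs v⁻¹ (t, 1) = (cs.simple i, d) := by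
    refine ⟨(1 : ℤˣ) * (-1 : ℤˣ) ^ (cnt t (cs.rightInvSeq (rword cs v⁻¹))), ?_⟩
    rw [Phi_apply', inv_inv, hvt]
  obtain ⟨c, hc⟩ : ∃ c : ℤˣ, ∀ ε : ℤˣ, Phi cs v (cs.simple i, ε) = (t, ε * c) := by
    refine ⟨(-1 : ℤˣ) ^ (cnt (cs.simple i) (cs.rightInvSeq (rword cs v))), fun ε => ?_⟩
    rw [Phi_apply', ← ht_eq]
  have hdc : d * c = 1 := by
    have h1 : Phi cs v (Phi cs v⁻¹ (t, 1)) = (t, 1) := by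
      rw [← Equiv.Perm.mul_apply, ← map_mul, mul_inv_cancel, map_one, Equiv.Perm.one_apply]
    rw [hd, hc d] at h1
    exact (Prod.ext_iff.mp h1).2
  have hsi : Phi cs (cs.simple i) (cs.simple i, d) = (cs.simple i, -d) := by
    rw [show Phi cs (cs.simple i) = esgn cs i from cs.lift_apply_simple (esgn_liftable cs) i]
    simp [esgn_apply, esgnFun, cs.simple_mul_simple_self]
  rw [hmul]
  rw [Equiv.Perm.mul_apply, Equiv.Perm.mul_apply, hd, hsi]
  have : Phi cs v (cs.simple i, -d) = (t, -d * c) := hc (-d)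
  rw [this, neg_mul, hdc]

/-- Strong exchange property (right, membership form). -/
theorem strong_exchange {w t : W} (ht : cs.IsReflection t)
    (hlt : cs.length (w * t) < cs.length w) {ω : List B} (hω : cs.IsReduced ω)
    (hπ : cs.wordProd ω = w) : t ∈ cs.rightInvSeq ω := by
  by_contra hmem
  have h0 : cnt t (cs.rightInvSeq ω) = 0 := cnt_eq_zero_of_not_mem hmem
  -- sign of Phi w at (t, 1) is +1
  have h1 : Phi cs w (t, 1) = (w * t * w⁻¹, 1) := by
    rw [← hπ, Phi_apply_word', h0, pow_zero, mul_one]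
  -- now compute Phi (w * t) (t, 1) in two ways
  have h2 : Phi cs (w * t) (t, 1) = (w * t * w⁻¹, -1) := by
    rw [map_mul, Equiv.Perm.mul_apply, Phi_reflection_self cs ht, ← hπ, Phi_apply_word', h0,
      pow_zero, mul_one, hπ]
  have h3 := Phi_apply_word' cs (rword cs (w * t)) t 1
  rw [rword_wordProd] at h3
  rw [h2] at h3
  have hsgn : (-1 : ℤˣ)
      = (1 : ℤˣ) * (-1 : ℤˣ) ^ (cnt t (cs.rightInvSeq (rword cs (w * t)))) :=
    (Prod.ext_iff.mp h3).2
  have hne : cnt t (cs.rightInvSeq (rword cs (w * t))) ≠ 0 := by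
    intro h0'
    rw [h0', pow_zero, mul_one] at hsgn
    exact absurd hsgn (by decide)
  have hmem' : t ∈ cs.rightInvSeq (rword cs (w * t)) := mem_of_cnt_ne_zero hne
  have hinv := cs.isRightInversion_of_mem_rightInvSeq (rword_isReduced cs (w * t)) hmem'
  rw [rword_wordProd] at hinv
  have hh : cs.length (w * t * t) < cs.length (w * t) := hinv.2
  rw [mul_assoc, ht.mul_self, mul_one] at hh
  omega


theorem strong_exchange_erase {w t : W} (ht : cs.IsReflection t)
    (hlt : cs.length (w * t) < cs.length w) {ω : List B} (hπ : cs.wordProd ω = w)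
    (hω : cs.IsReduced ω) : ∃ k < ω.length, cs.wordProd (ω.eraseIdx k) = w * t := by
  have hmem := strong_exchange cs ht hlt hω hπ
  obtain ⟨k, hk, hget⟩ := List.mem_iff_getElem.mp hmem
  rw [cs.length_rightInvSeq] at hk
  refine ⟨k, hk, ?_⟩
  rw [← hπ, ← cs.wordProd_mul_getD_rightInvSeq ω k]
  congr 1
  rw [List.getD_eq_getElem _ 1 (by rw [cs.length_rightInvSeq]; exact hk), hget]

theorem left_exchange_simple {w : W} {i : B}
    (hlt : cs.length (cs.simple i * w) < cs.length w) {ω : List B} (hπ : cs.wordProd ω = w)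
    (hω : cs.IsReduced ω) :
    ∃ k < ω.length, (cs.leftInvSeq ω).getD k 1 = cs.simple i ∧
      cs.wordProd (ω.eraseIdx k) = cs.simple i * w := by
  have hrev : cs.wordProd ω.reverse = w⁻¹ := by rw [cs.wordProd_reverse, hπ]
  have hred : cs.IsReduced ω.reverse := (cs.isReduced_reverse_iff ω).mpr hω
  have hlen : cs.length (w⁻¹ * cs.simple i) < cs.length w⁻¹ := by
    have h1 : w⁻¹ * cs.simple i = (cs.simple i * w)⁻¹ := by
      rw [mul_inv_rev, cs.inv_simple]
    rw [h1, cs.length_inv, cs.length_inv]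
    exact hlt
  have hmem := strong_exchange cs (cs.isReflection_simple i) hlen hred hrev
  rw [cs.rightInvSeq_reverse] at hmem
  have hmem' : cs.simple i ∈ cs.leftInvSeq ω := List.mem_reverse.mp hmem
  obtain ⟨k, hk, hget⟩ := List.mem_iff_getElem.mp hmem'
  rw [cs.length_leftInvSeq] at hk
  have hgetD : (cs.leftInvSeq ω).getD k 1 = cs.simple i := by
    rw [List.getD_eq_getElem _ 1 (by rw [cs.length_leftInvSeq]; exact hk), hget]
  refine ⟨k, hk, hgetD, ?_⟩
  rw [← cs.getD_leftInvSeq_mul_wordProd ω k, hgetD, hπ]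

/-- Deletion property: every word has a reduced sublist with the same product. -/
theorem exists_reduced_sublist : ∀ (n : ℕ) (χ : List B), χ.length ≤ n →
    ∃ κ, κ.Sublist χ ∧ cs.IsReduced κ ∧ cs.wordProd κ = cs.wordProd χ := by
  intro n
  induction n with
  | zero =>
    intro χ hχ
    have : χ = [] := List.length_eq_zero_iff.mp (by omega)
    subst this
    exact ⟨[], List.Sublist.refl _, by simp [CoxeterSystem.IsReduced], rfl⟩
  | succ n ih =>
    intro χ hχ
    by_cases hred : cs.IsReduced χ
    · exact ⟨χ, List.Sublist.refl _, hred, rfl⟩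
    · classical
      have hlt : cs.length (cs.wordProd χ) < χ.length :=
        lt_of_le_of_ne (cs.length_wordProd_le χ) hred
      have hne : χ ≠ [] := by
        intro h; subst h; exact hred (by simp [CoxeterSystem.IsReduced])
      have hpos : 0 < χ.length := List.length_pos_iff.mpr hne
      have hwit : ¬ cs.IsReduced (χ.take (χ.length - 1 + 1)) := by
        rw [(by omega : χ.length - 1 + 1 = χ.length), List.take_length]
        exact hred
      have hP : ∃ j, ¬ cs.IsReduced (χ.take (j + 1)) := ⟨χ.length - 1, hwit⟩
      set j := Nat.find hP with hj
      have hPj : ¬ cs.IsReduced (χ.take (j + 1)) := Nat.find_spec hP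
      have hjlt : j < χ.length := lt_of_le_of_lt (Nat.find_min' hP hwit) (by omega)
      have hτred : cs.IsReduced (χ.take j) := by
        rcases Nat.eq_zero_or_pos j with h0 | h0
        · rw [h0]; simp [CoxeterSystem.IsReduced]
        · have h2 := Nat.find_min hP (show j - 1 < j by omega)
          rw [not_not] at h2
          rwa [(by omega : j - 1 + 1 = j)] at h2
      -- the letter at position j
      have htake : χ.take (j + 1) = χ.take j ++ [χ[j]] := by
        rw [List.take_succ, List.getElem?_eq_getElem hjlt]
        rfl
      have hlen_take : (χ.take j).length = j := by
        rw [List.length_take]; omega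
      have hprod : cs.wordProd (χ.take (j + 1)) = cs.wordProd (χ.take j) * cs.simple χ[j] := by
        rw [htake, cs.wordProd_append, cs.wordProd_singleton]
      have hlt2 : cs.length (cs.wordProd (χ.take j) * cs.simple χ[j])
          < cs.length (cs.wordProd (χ.take j)) := by
        have h1 : cs.length (cs.wordProd (χ.take j)) = j := by
          rw [hτred, hlen_take]
        rcases cs.length_mul_simple (cs.wordProd (χ.take j)) χ[j] with h | h
        · exfalso
          apply hPj
          unfold CoxeterSystem.IsReduced
          rw [hprod, h, h1, htake, List.length_append, hlen_take]
          simp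
        · omega
      obtain ⟨k, hk, hke⟩ := strong_exchange_erase cs (cs.isReflection_simple χ[j]) hlt2
        rfl hτred
      -- the new shorter word
      set κ₀ := (χ.take j).eraseIdx k ++ χ.drop (j + 1) with hκ₀
      have hκ₀π : cs.wordProd κ₀ = cs.wordProd χ := by
        rw [hκ₀, cs.wordProd_append, hke]
        conv_rhs => rw [← List.take_append_drop (j + 1) χ]
        rw [cs.wordProd_append, hprod]
      have hκ₀sub : κ₀.Sublist χ := by
        have h1 : χ = χ.take j ++ (χ[j] :: χ.drop (j + 1)) := by
          conv_lhs => rw [← List.take_append_drop j χ]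
          rw [List.drop_eq_getElem_cons hjlt]
        rw [hκ₀]
        conv_rhs => rw [h1]
        exact List.Sublist.append (List.eraseIdx_sublist _ k)
          (List.sublist_cons_self _ _)
      have hκ₀len : κ₀.length ≤ n := by
        rw [hκ₀, List.length_append, List.length_eraseIdx, if_pos (by omega : k < (χ.take j).length),
          hlen_take, List.length_drop]
        omega
      obtain ⟨κ, h1, h2, h3⟩ := ih κ₀ hκ₀len
      exact ⟨κ, h1.trans hκ₀sub, h2, by rw [h3, hκ₀π]⟩

/-- One step of the Bruhat chain order. -/
def brLt (a b : W) : Prop :=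
  cs.length a < cs.length b ∧ ∃ t, cs.IsReflection t ∧ b = a * t

/-- The Bruhat chain order. -/
def brLe : W → W → Prop := Relation.ReflTransGen (brLt cs)

theorem brLe_refl (a : W) : brLe cs a a := Relation.ReflTransGen.refl

theorem brLe_trans {a b c : W} (h1 : brLe cs a b) (h2 : brLe cs b c) : brLe cs a c :=
  Relation.ReflTransGen.trans h1 h2

theorem brLe_of_brLt {a b : W} (h : brLt cs a b) : brLe cs a b :=
  Relation.ReflTransGen.single h

theorem brLt_smul_of_lt {x : W} {i : B} (h : cs.length (cs.simple i * x) < cs.length x) :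
    brLt cs (cs.simple i * x) x := by
  refine ⟨h, x⁻¹ * cs.simple i * x, ?_, ?_⟩
  · have := (cs.isReflection_simple i).conj x⁻¹
    rwa [inv_inv] at this
  · rw [← mul_assoc, ← mul_assoc, mul_inv_cancel_right, mul_assoc, cs.simple_mul_simple_cancel_left]

theorem brLt_smul_of_gt {x : W} {i : B} (h : cs.length x < cs.length (cs.simple i * x)) :
    brLt cs x (cs.simple i * x) := by
  refine ⟨h, x⁻¹ * cs.simple i * x, ?_, ?_⟩
  · have := (cs.isReflection_simple i).conj x⁻¹
    rwa [inv_inv] at this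
  · rw [← mul_assoc, ← mul_assoc, mul_inv_cancel, one_mul]

/-- Bruhat chain order implies the universal subword property. -/
theorem brLe_subword {u w : W} (h : brLe cs u w) :
    ∀ ρ : List B, cs.IsReduced ρ → cs.wordProd ρ = w →
      ∃ σ, σ.Sublist ρ ∧ cs.IsReduced σ ∧ cs.wordProd σ = u := by
  induction h with
  | refl => exact fun ρ hρ hπ => ⟨ρ, List.Sublist.refl ρ, hρ, hπ⟩
  | tail hab hstep ih =>
    rename_i b c
    intro ρ hρ hπ
    obtain ⟨hlt, t, ht, hc⟩ := hstep
    have hct : c * t = b := by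
      rw [hc, mul_assoc, ht.mul_self, mul_one]
    have hlt' : cs.length (c * t) < cs.length c := by rw [hct]; omega
    obtain ⟨k, hk, hke⟩ := strong_exchange_erase cs ht hlt' hπ hρ
    obtain ⟨κ, hκsub, hκred, hκπ⟩ := exists_reduced_sublist cs (ρ.eraseIdx k).length
      (ρ.eraseIdx k) le_rfl
    obtain ⟨σ, h1, h2, h3⟩ := ih κ hκred (by rw [hκπ, hke, hct])
    exact ⟨σ, h1.trans (hκsub.trans (List.eraseIdx_sublist _ k)), h2, h3⟩
theorem isReduced_cons {i : B} {ρ₂ : List B} (h : cs.IsReduced (i :: ρ₂)) :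
    cs.IsReduced ρ₂ ∧
      cs.length (cs.wordProd ρ₂) < cs.length (cs.simple i * cs.wordProd ρ₂) := by
  have h1 : cs.length (cs.wordProd (i :: ρ₂)) = ρ₂.length + 1 := by
    rw [h, List.length_cons]
  rw [cs.wordProd_cons] at h1
  have h3 : cs.length (cs.wordProd ρ₂) ≤ ρ₂.length := cs.length_wordProd_le ρ₂
  rcases cs.length_simple_mul (cs.wordProd ρ₂) i with h4 | h4
  · constructor
    · unfold CoxeterSystem.IsReduced
      omega
    · omega
  · omega

theorem lift_step_desc {v w t : W} {i : B} (ht : cs.IsReflection t) (hw : w = v * t)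
    (hvw : cs.length v < cs.length w) (hdw : cs.length (cs.simple i * w) < cs.length w)
    (hdv : cs.length (cs.simple i * v) < cs.length v) :
    brLe cs (cs.simple i * v) (cs.simple i * w) := by
  have hwt : w * t = v := by rw [hw, mul_assoc, ht.mul_self, mul_one]
  set τ := rword cs (cs.simple i * w) with hτ
  have hτred : cs.IsReduced τ := rword_isReduced cs (cs.simple i * w)
  have hτπ : cs.wordProd τ = cs.simple i * w := rword_wordProd cs (cs.simple i * w)
  have hτlen : τ.length = cs.length (cs.simple i * w) := by
    rw [← hτred, hτπ]
  have hdw1 : cs.length (cs.simple i * w) + 1 = cs.length w := by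
    rcases cs.length_simple_mul w i with h | h <;> omega
  have hρπ : cs.wordProd (i :: τ) = w := by
    rw [cs.wordProd_cons, hτπ, cs.simple_mul_simple_cancel_left]
  have hρred : cs.IsReduced (i :: τ) := by
    unfold CoxeterSystem.IsReduced
    rw [hρπ, List.length_cons]
    omega
  have hltwt : cs.length (w * t) < cs.length w := by rw [hwt]; exact hvw
  obtain ⟨k, hk, hke⟩ := strong_exchange_erase cs ht hltwt hρπ hρred
  rw [hwt] at hke
  cases k with
  | zero =>
    have hv : cs.simple i * w = v := by
      rw [← hke]
      rw [show (i :: τ).eraseIdx 0 = τ from rfl, hτπ]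
    rw [← hv] at hdv ⊢
    exact brLe_of_brLt cs (brLt_smul_of_lt cs hdv)
  | succ k =>
    have h1 : (i :: τ).eraseIdx (k + 1) = i :: τ.eraseIdx k := rfl
    have h2 : cs.wordProd (i :: τ.eraseIdx k) = v := by rw [← h1, hke]
    have h3 : cs.simple i * v = cs.wordProd (τ.eraseIdx k) := by
      rw [← h2, cs.wordProd_cons, cs.simple_mul_simple_cancel_left]
    have hk' : k < τ.length := by
      rw [List.length_cons] at hk; omega
    have hr := cs.wordProd_mul_getD_rightInvSeq τ k
    set r := (cs.rightInvSeq τ).getD k 1 with hrdef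
    have hrrefl : cs.IsReflection r := by
      apply cs.isReflection_of_mem_rightInvSeq τ
      rw [hrdef, List.getD_eq_getElem _ 1 (by rw [cs.length_rightInvSeq]; exact hk')]
      exact List.getElem_mem _
    have hrr : r * r = 1 := cs.getD_rightInvSeq_mul_self τ k
    have hstep_eq : cs.simple i * w = (cs.simple i * v) * r := by
      rw [h3, ← hr, mul_assoc, hrr, mul_one, hτπ]
    have hlen2 : cs.length (cs.simple i * v) < cs.length (cs.simple i * w) := by
      have h5 : cs.length (cs.simple i * v) ≤ (τ.eraseIdx k).length := by
        rw [h3]; exact cs.length_wordProd_le _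
      rw [List.length_eraseIdx, if_pos hk'] at h5
      omega
    exact brLe_of_brLt cs ⟨hlen2, r, hrrefl, hstep_eq⟩

theorem lift_step_asc {v w t : W} {i : B} (ht : cs.IsReflection t) (hw : w = v * t)
    (hvw : cs.length v < cs.length w) (hdw : cs.length (cs.simple i * w) < cs.length w)
    (hav : cs.length v < cs.length (cs.simple i * v))
    (hE1 : ∀ ρ : List B, cs.IsReduced ρ → ρ.length = cs.length (cs.simple i * w) →
      ∀ σ, σ.Sublist ρ → cs.IsReduced σ →
        brLe cs (cs.wordProd σ) (cs.wordProd ρ)) :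
    brLe cs v (cs.simple i * w) := by
  have hvle : brLe cs v w := brLe_of_brLt cs ⟨hvw, t, ht, hw⟩
  set τ := rword cs (cs.simple i * w) with hτ
  have hτred : cs.IsReduced τ := rword_isReduced cs (cs.simple i * w)
  have hτπ : cs.wordProd τ = cs.simple i * w := rword_wordProd cs (cs.simple i * w)
  have hτlen : τ.length = cs.length (cs.simple i * w) := by
    rw [← hτred, hτπ]
  have hdw1 : cs.length (cs.simple i * w) + 1 = cs.length w := by
    rcases cs.length_simple_mul w i with h | h <;> omega
  have hρπ : cs.wordProd (i :: τ) = w := by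
    rw [cs.wordProd_cons, hτπ, cs.simple_mul_simple_cancel_left]
  have hρred : cs.IsReduced (i :: τ) := by
    unfold CoxeterSystem.IsReduced
    rw [hρπ, List.length_cons]
    omega
  obtain ⟨σ, hσsub, hσred, hσπ⟩ := brLe_subword cs hvle (i :: τ) hρred hρπ
  rcases List.sublist_cons_iff.mp hσsub with hsub2 | ⟨σ₂, rfl, hsub2⟩
  · have h1 := hE1 τ hτred hτlen σ hsub2 hσred
    rw [hσπ, hτπ] at h1
    exact h1
  · exfalso
    have hπσ₂ : cs.wordProd σ₂ = cs.simple i * v := by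
      rw [← hσπ, cs.wordProd_cons, cs.simple_mul_simple_cancel_left]
    have hlen1 : cs.length (cs.simple i * v) ≤ σ₂.length := by
      rw [← hπσ₂]; exact cs.length_wordProd_le σ₂
    have hlv : cs.length v = σ₂.length + 1 := by
      have := hσred
      unfold CoxeterSystem.IsReduced at this
      rw [hσπ, List.length_cons] at this
      omega
    omega

theorem master : ∀ n : ℕ,
    (∀ w, cs.length w = n → ∀ i, cs.length (cs.simple i * w) < cs.length w →
      ∀ u, brLe cs u w → cs.length u < cs.length (cs.simple i * u) →
        brLe cs u (cs.simple i * w)) ∧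
    (∀ y, cs.length y = n → ∀ i, cs.length y < cs.length (cs.simple i * y) →
      ∀ x, brLe cs x y → cs.length x < cs.length (cs.simple i * x) →
        brLe cs (cs.simple i * x) (cs.simple i * y)) ∧
    (∀ ρ : List B, cs.IsReduced ρ → ρ.length = n → ∀ σ, σ.Sublist ρ → cs.IsReduced σ →
      brLe cs (cs.wordProd σ) (cs.wordProd ρ)) := by
  intro n
  induction n using Nat.strong_induction_on with
  | _ n IH =>
  refine ⟨?_, ?_, ?_⟩
  · -- Z3
    intro w hw i hdw u hu hau
    rcases Relation.ReflTransGen.cases_tail hu with heq | ⟨v, huv, hstep⟩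
    · subst heq; omega
    · obtain ⟨hlt, t, ht, hweq⟩ := hstep
      by_cases hsv : cs.length (cs.simple i * v) < cs.length v
      · have hZ := (IH (cs.length v) (by omega)).1 v rfl i hsv u huv hau
        exact brLe_trans cs hZ (lift_step_desc cs ht hweq hlt hdw hsv)
      · have hsv' : cs.length v < cs.length (cs.simple i * v) := by
          rcases cs.length_simple_mul v i with h | h <;> omega
        have hCb := lift_step_asc cs ht hweq hlt hdw hsv'
          (fun ρ h1 h2 σ h3 h4 =>
            (IH (cs.length (cs.simple i * w)) (by omega)).2.2 ρ h1 h2 σ h3 h4)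
        exact brLe_trans cs huv hCb
  · -- B (mult-up)
    intro y hy i hay x hxy hax
    rcases Relation.ReflTransGen.cases_tail hxy with heq | ⟨v, hxv, hstep⟩
    · subst heq; exact brLe_refl cs _
    · obtain ⟨hlt, t, ht, hyeq⟩ := hstep
      by_cases hsv : cs.length (cs.simple i * v) < cs.length v
      · have h1 := (IH (cs.length v) (by omega)).1 v rfl i hsv x hxv hax
        have h2 : cs.length (cs.simple i * v)
            < cs.length (cs.simple i * (cs.simple i * v)) := by
          rw [cs.simple_mul_simple_cancel_left]; exact hsv
        have h3 := (IH (cs.length (cs.simple i * v)) (by omega)).2.1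
          (cs.simple i * v) rfl i h2 x h1 hax
        rw [cs.simple_mul_simple_cancel_left] at h3
        exact brLe_trans cs h3 (brLe_trans cs (brLe_of_brLt cs ⟨hlt, t, ht, hyeq⟩)
          (brLe_of_brLt cs (brLt_smul_of_gt cs hay)))
      · have hsv' : cs.length v < cs.length (cs.simple i * v) := by
          rcases cs.length_simple_mul v i with h | h <;> omega
        have h1 := (IH (cs.length v) (by omega)).2.1 v rfl i hsv' x hxv hax
        have hstep2 : brLt cs (cs.simple i * v) (cs.simple i * y) := by
          refine ⟨?_, t, ht, by rw [hyeq, mul_assoc]⟩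
          have e1 : cs.length (cs.simple i * v) = cs.length v + 1 := by
            rcases cs.length_simple_mul v i with h | h <;> omega
          have e2 : cs.length (cs.simple i * y) = cs.length y + 1 := by
            rcases cs.length_simple_mul y i with h | h <;> omega
          omega
        exact brLe_trans cs h1 (brLe_of_brLt cs hstep2)
  · -- E1
    intro ρ hρ hlen σ hsub hσ
    cases ρ with
    | nil =>
      have : σ = [] := List.sublist_nil.mp hsub
      subst this
      exact brLe_refl cs _
    | cons i ρ₂ =>
      obtain ⟨hρ₂red, hρ₂asc⟩ := isReduced_cons cs hρ
      have hρ₂len : ρ₂.length = n - 1 := by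
        rw [List.length_cons] at hlen; omega
      have hn1 : n - 1 < n := by
        rw [List.length_cons] at hlen; omega
      rcases List.sublist_cons_iff.mp hsub with h2 | ⟨σ₂, rfl, h2⟩
      · have h1 := (IH (n - 1) hn1).2.2 ρ₂ hρ₂red hρ₂len σ h2 hσ
        have hstep : brLt cs (cs.wordProd ρ₂) (cs.wordProd (i :: ρ₂)) := by
          rw [cs.wordProd_cons]
          exact brLt_smul_of_gt cs hρ₂asc
        exact brLe_trans cs h1 (brLe_of_brLt cs hstep)
      · obtain ⟨hσ₂red, hσ₂asc⟩ := isReduced_cons cs hσ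
        have h1 := (IH (n - 1) hn1).2.2 ρ₂ hρ₂red hρ₂len σ₂ h2 hσ₂red
        have hlρ₂ : cs.length (cs.wordProd ρ₂) = n - 1 := by
          rw [hρ₂red]; exact hρ₂len
        have h3 := (IH (n - 1) hn1).2.1 (cs.wordProd ρ₂) hlρ₂ i hρ₂asc
          (cs.wordProd σ₂) h1 hσ₂asc
        rw [cs.wordProd_cons, cs.wordProd_cons]
        exact h3

/-- The universal subword property for `BruhatLE`. -/
theorem subword_property {u w : W} (h : BruhatLE cs u w) {ρ : List B}
    (hρ : cs.IsReduced ρ) (hπ : cs.wordProd ρ = w) :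
    ∃ σ, σ.Sublist ρ ∧ cs.IsReduced σ ∧ cs.wordProd σ = u := by
  obtain ⟨ω, hω, hπω, σ0, hsub0, hσ0, hπσ0⟩ := h
  have h1 : brLe cs u w := by
    have h2 := (master cs ω.length).2.2 ω hω rfl σ0 hsub0 hσ0
    rwa [hπσ0, hπω] at h2
  exact brLe_subword cs h1 ρ hρ hπ
theorem rword_length (x : W) : (rword cs x).length = cs.length x := by
  rw [← rword_isReduced cs x, rword_wordProd]

theorem bruhatLE_refl (x : W) : BruhatLE cs x x :=
  ⟨rword cs x, rword_isReduced cs x, rword_wordProd cs x,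
    rword cs x, List.Sublist.refl _, rword_isReduced cs x, rword_wordProd cs x⟩

theorem bruhatLE_one {z : W} (h : BruhatLE cs z 1) : z = 1 := by
  obtain ⟨ρ, hρ, hπ, σ, hsub, hσ, hπσ⟩ := h
  have h0 : ρ.length = 0 := by
    rw [← hρ, hπ, cs.length_one]
  have hρnil : ρ = [] := List.length_eq_zero_iff.mp h0
  subst hρnil
  have hσnil : σ = [] := List.sublist_nil.mp hsub
  subst hσnil
  rw [← hπσ, cs.wordProd_nil]

theorem bruhatLE_of_le_smul {x v : W} {i : B} (h : BruhatLE cs x v)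
    (hv : cs.length v < cs.length (cs.simple i * v)) :
    BruhatLE cs x (cs.simple i * v) := by
  obtain ⟨ρ, hρ, hπ, σ, hsub, hσ, hπσ⟩ := h
  have hvlen : cs.length (cs.simple i * v) = cs.length v + 1 := by
    rcases cs.length_simple_mul v i with h' | h' <;> omega
  refine ⟨i :: ρ, ?_, ?_, σ, hsub.cons i, hσ, hπσ⟩
  · unfold CoxeterSystem.IsReduced
    rw [cs.wordProd_cons, hπ, List.length_cons, hvlen]
    rw [← hρ, hπ]
  · rw [cs.wordProd_cons, hπ]

theorem smul_bruhatLE {x v : W} {i : B} (h : BruhatLE cs x v)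
    (hx : cs.length x < cs.length (cs.simple i * x))
    (hv : cs.length v < cs.length (cs.simple i * v)) :
    BruhatLE cs (cs.simple i * x) (cs.simple i * v) := by
  obtain ⟨ρ, hρ, hπ, σ, hsub, hσ, hπσ⟩ := h
  have hvlen : cs.length (cs.simple i * v) = cs.length v + 1 := by
    rcases cs.length_simple_mul v i with h' | h' <;> omega
  have hxlen : cs.length (cs.simple i * x) = cs.length x + 1 := by
    rcases cs.length_simple_mul x i with h' | h' <;> omega
  refine ⟨i :: ρ, ?_, ?_, i :: σ, hsub.cons₂ i, ?_, ?_⟩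
  · unfold CoxeterSystem.IsReduced
    rw [cs.wordProd_cons, hπ, List.length_cons, hvlen, ← hρ, hπ]
  · rw [cs.wordProd_cons, hπ]
  · unfold CoxeterSystem.IsReduced
    rw [cs.wordProd_cons, hπσ, List.length_cons, hxlen, ← hσ, hπσ]
  · rw [cs.wordProd_cons, hπσ]

theorem weak_ascent {z u : W} {i : B} (hzu : RWeakLE cs z u)
    (hu : cs.length u < cs.length (cs.simple i * u)) :
    cs.length z < cs.length (cs.simple i * z) := by
  by_contra h'
  have hlt : cs.length (cs.simple i * z) + 1 = cs.length z := by
    rcases cs.length_simple_mul z i with h'' | h'' <;> omega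
  have hdecomp : cs.simple i * u = (cs.simple i * z) * (z⁻¹ * u) := by
    rw [mul_assoc, mul_inv_cancel_left]
  have hle : cs.length (cs.simple i * u)
      ≤ cs.length (cs.simple i * z) + cs.length (z⁻¹ * u) := by
    rw [hdecomp]; exact cs.length_mul_le _ _
  unfold RWeakLE at hzu
  omega

theorem weak_desc_step {z u : W} {i : B} (hzu : RWeakLE cs z u)
    (hz : cs.length (cs.simple i * z) < cs.length z)
    (hu : cs.length (cs.simple i * u) < cs.length u) :
    RWeakLE cs (cs.simple i * z) (cs.simple i * u) := by
  have hz1 : cs.length (cs.simple i * z) + 1 = cs.length z := by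
    rcases cs.length_simple_mul z i with h | h <;> omega
  have hu1 : cs.length (cs.simple i * u) + 1 = cs.length u := by
    rcases cs.length_simple_mul u i with h | h <;> omega
  unfold RWeakLE at hzu ⊢
  have hcanc : (cs.simple i * z)⁻¹ * (cs.simple i * u) = z⁻¹ * u := by
    rw [mul_inv_rev, cs.inv_simple, mul_assoc, ← mul_assoc (cs.simple i),
      cs.simple_mul_simple_self, one_mul]
  rw [hcanc]
  omega

theorem lis_append_getD {ρz ρa : List B} {k : ℕ} (hk : k < ρz.length) :
    (cs.leftInvSeq (ρz ++ ρa)).getD k 1 = (cs.leftInvSeq ρz).getD k 1 := by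
  rw [cs.getD_leftInvSeq, cs.getD_leftInvSeq,
    List.take_append_of_le_length (by omega)]
  have hget : (ρz ++ ρa)[k]? = ρz[k]? := by
    rw [List.getElem?_append, if_pos hk]
  rw [hget]

theorem weak_le_smul {z u : W} {i : B} (hzu : RWeakLE cs z u)
    (hz : cs.length z < cs.length (cs.simple i * z))
    (hu : cs.length (cs.simple i * u) < cs.length u) :
    RWeakLE cs z (cs.simple i * u) := by
  have hu1 : cs.length (cs.simple i * u) + 1 = cs.length u := by
    rcases cs.length_simple_mul u i with h | h <;> omega
  set ρz := rword cs z with hρz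
  set ρa := rword cs (z⁻¹ * u) with hρa
  have hzlen : ρz.length = cs.length z := rword_length cs z
  have halen : ρa.length = cs.length (z⁻¹ * u) := rword_length cs (z⁻¹ * u)
  have hπρ : cs.wordProd (ρz ++ ρa) = u := by
    rw [cs.wordProd_append, rword_wordProd, rword_wordProd, mul_inv_cancel_left]
  have hρred : cs.IsReduced (ρz ++ ρa) := by
    unfold CoxeterSystem.IsReduced
    rw [hπρ, List.length_append, rword_length, rword_length]
    exact hzu
  obtain ⟨k, hk, hgetD, herase⟩ := left_exchange_simple cs hu hπρ hρred
  rw [List.length_append] at hk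
  by_cases hcase : k < ρz.length
  · exfalso
    have h1 : (cs.leftInvSeq ρz).getD k 1 = cs.simple i := by
      rw [← lis_append_getD cs hcase, hgetD]
    have h2 : cs.wordProd (ρz.eraseIdx k) = cs.simple i * z := by
      rw [← cs.getD_leftInvSeq_mul_wordProd ρz k, h1, rword_wordProd]
    have h3 : cs.length (cs.simple i * z) ≤ (ρz.eraseIdx k).length := by
      rw [← h2]; exact cs.length_wordProd_le _
    rw [List.length_eraseIdx, if_pos hcase] at h3
    omega
  · push_neg at hcase
    have herase2 : (ρz ++ ρa).eraseIdx k = ρz ++ ρa.eraseIdx (k - ρz.length) :=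
      List.eraseIdx_append_of_length_le hcase ρa
    have h2 : cs.simple i * u = z * cs.wordProd (ρa.eraseIdx (k - ρz.length)) := by
      rw [← herase, herase2, cs.wordProd_append, rword_wordProd]
    have h3 : z⁻¹ * (cs.simple i * u) = cs.wordProd (ρa.eraseIdx (k - ρz.length)) := by
      rw [h2, inv_mul_cancel_left]
    have h4 : cs.length (z⁻¹ * (cs.simple i * u))
        ≤ (ρa.eraseIdx (k - ρz.length)).length := by
      rw [h3]; exact cs.length_wordProd_le _
    rw [List.length_eraseIdx, if_pos (by omega)] at h4
    have h5 : cs.length (cs.simple i * u)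
        ≤ cs.length z + cs.length (z⁻¹ * (cs.simple i * u)) := by
      have hd2 : cs.simple i * u = z * (z⁻¹ * (cs.simple i * u)) :=
        (mul_inv_cancel_left z _).symm
      calc cs.length (cs.simple i * u)
          = cs.length (z * (z⁻¹ * (cs.simple i * u))) := by rw [← hd2]
        _ ≤ cs.length z + cs.length (z⁻¹ * (cs.simple i * u)) := cs.length_mul_le _ _
    unfold RWeakLE at hzu ⊢
    omega

theorem desc_or_move {i : B} {ω' : List B} (hred : cs.IsReduced (i :: ω')) {z : W}
    (h : BruhatLE cs z (cs.wordProd (i :: ω'))) :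
    (cs.length (cs.simple i * z) < cs.length z →
      BruhatLE cs (cs.simple i * z) (cs.wordProd ω')) ∧
    (cs.length z < cs.length (cs.simple i * z) →
      BruhatLE cs z (cs.wordProd ω')) := by
  obtain ⟨σ, hsub, hσred, hσπ⟩ := subword_property cs h hred rfl
  obtain ⟨hω'red, hω'asc⟩ := isReduced_cons cs hred
  rcases List.sublist_cons_iff.mp hsub with h2 | ⟨σ₂, rfl, h2⟩
  · constructor
    · intro hdesc
      obtain ⟨k, hk, _, herase⟩ := left_exchange_simple cs hdesc hσπ hσred
      refine ⟨ω', hω'red, rfl, σ.eraseIdx k, (List.eraseIdx_sublist σ k).trans h2, ?_, herase⟩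
      unfold CoxeterSystem.IsReduced
      rw [herase, List.length_eraseIdx, if_pos hk]
      have e1 : cs.length (cs.simple i * z) + 1 = cs.length z := by
        rcases cs.length_simple_mul z i with h' | h' <;> omega
      have e2 : σ.length = cs.length z := by rw [← hσred, hσπ]
      omega
    · intro _
      exact ⟨ω', hω'red, rfl, σ, h2, hσred, hσπ⟩
  · obtain ⟨hσ₂red, hσ₂asc⟩ := isReduced_cons cs hσred
    have hπ2 : cs.wordProd σ₂ = cs.simple i * z := by
      rw [← hσπ, cs.wordProd_cons, cs.simple_mul_simple_cancel_left]
    constructor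
    · intro _
      exact ⟨ω', hω'red, rfl, σ₂, h2, hσ₂red, hπ2⟩
    · intro hasc
      exfalso
      rw [hπ2, cs.simple_mul_simple_cancel_left] at hσ₂asc
      omega

theorem main_lemma : ∀ ω : List B, cs.IsReduced ω → ∀ u : W,
    RWeakLE cs (u * downRWord cs u⁻¹ ω) u ∧
    BruhatLE cs (u * downRWord cs u⁻¹ ω) (cs.wordProd ω) ∧
    ∀ z : W, RWeakLE cs z u → BruhatLE cs z (cs.wordProd ω) →
      BruhatLE cs z (u * downRWord cs u⁻¹ ω) := by
  intro ω
  induction ω with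
  | nil =>
    intro _ u
    have hd : u * downRWord cs u⁻¹ [] = 1 := by
      show u * u⁻¹ = 1
      rw [mul_inv_cancel]
    rw [hd, cs.wordProd_nil]
    refine ⟨?_, bruhatLE_refl cs 1, ?_⟩
    · unfold RWeakLE
      rw [cs.length_one, inv_one, one_mul, zero_add]
    · intro z _ hz
      rw [bruhatLE_one cs hz]
      exact bruhatLE_refl cs 1
  | cons i ω' ih =>
    intro hred u
    obtain ⟨hω'red, hω'asc⟩ := isReduced_cons cs hred
    have hπc : cs.wordProd (i :: ω') = cs.simple i * cs.wordProd ω' := cs.wordProd_cons i ω'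
    by_cases hcase : cs.length (cs.simple i * u) < cs.length u
    · -- Case A : i is a left descent of u
      have hinv : u⁻¹ * cs.simple i = (cs.simple i * u)⁻¹ := by
        rw [mul_inv_rev, cs.inv_simple]
      have hcond : cs.length (u⁻¹ * cs.simple i) < cs.length u⁻¹ := by
        rw [hinv, cs.length_inv, cs.length_inv]
        exact hcase
      have hm : u * downRWord cs u⁻¹ (i :: ω')
          = cs.simple i * ((cs.simple i * u) * downRWord cs (cs.simple i * u)⁻¹ ω') := by
        show u * downRWord cs
            (if cs.length (u⁻¹ * cs.simple i) < cs.length u⁻¹ then u⁻¹ * cs.simple i else u⁻¹)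
            ω' = _
        rw [if_pos hcond, hinv, ← mul_assoc, cs.simple_mul_simple_cancel_left]
      obtain ⟨ihA, ihB, ihC⟩ := ih hω'red (cs.simple i * u)
      set m' := (cs.simple i * u) * downRWord cs (cs.simple i * u)⁻¹ ω' with hm'def
      have hsu_len : cs.length (cs.simple i * u) + 1 = cs.length u := by
        rcases cs.length_simple_mul u i with h | h <;> omega
      have hsu_asc : cs.length (cs.simple i * u)
          < cs.length (cs.simple i * (cs.simple i * u)) := by
        rw [cs.simple_mul_simple_cancel_left]; omega
      have hm'asc : cs.length m' < cs.length (cs.simple i * m') :=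
        weak_ascent cs ihA hsu_asc
      have hm'len : cs.length (cs.simple i * m') = cs.length m' + 1 := by
        rcases cs.length_simple_mul m' i with h | h <;> omega
      rw [hm]
      refine ⟨?_, ?_, ?_⟩
      · -- RWeakLE (s i * m') u
        unfold RWeakLE
        have hinv2 : (cs.simple i * m')⁻¹ * u = m'⁻¹ * (cs.simple i * u) := by
          rw [mul_inv_rev, cs.inv_simple, mul_assoc]
        rw [hinv2, hm'len]
        unfold RWeakLE at ihA
        omega
      · rw [hπc]
        exact smul_bruhatLE cs ihB hm'asc hω'asc
      · intro z hzRW hzw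
        have hKH := desc_or_move cs hred hzw
        by_cases hzdesc : cs.length (cs.simple i * z) < cs.length z
        · have hz1 : cs.length (cs.simple i * z) + 1 = cs.length z := by
            rcases cs.length_simple_mul z i with h | h <;> omega
          have h1 : BruhatLE cs (cs.simple i * z) (cs.wordProd ω') := hKH.1 hzdesc
          have h2 : RWeakLE cs (cs.simple i * z) (cs.simple i * u) :=
            weak_desc_step cs hzRW hzdesc hcase
          have h3 : BruhatLE cs (cs.simple i * z) m' := ihC _ h2 h1
          have h4 : cs.length (cs.simple i * z)
              < cs.length (cs.simple i * (cs.simple i * z)) := by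
            rw [cs.simple_mul_simple_cancel_left]; omega
          have h5 := smul_bruhatLE cs h3 h4 hm'asc
          rwa [cs.simple_mul_simple_cancel_left] at h5
        · have hzasc : cs.length z < cs.length (cs.simple i * z) := by
            rcases cs.length_simple_mul z i with h | h <;> omega
          have h1 : BruhatLE cs z (cs.wordProd ω') := hKH.2 hzasc
          have h2 : RWeakLE cs z (cs.simple i * u) :=
            weak_le_smul cs hzRW hzasc hcase
          have h3 : BruhatLE cs z m' := ihC _ h2 h1
          exact bruhatLE_of_le_smul cs h3 hm'asc
    · -- Case B : i is a left ascent of u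
      have hcond : ¬ cs.length (u⁻¹ * cs.simple i) < cs.length u⁻¹ := by
        have hinv : u⁻¹ * cs.simple i = (cs.simple i * u)⁻¹ := by
          rw [mul_inv_rev, cs.inv_simple]
        rw [hinv, cs.length_inv, cs.length_inv]
        exact hcase
      have hm : u * downRWord cs u⁻¹ (i :: ω') = u * downRWord cs u⁻¹ ω' := by
        show u * downRWord cs
            (if cs.length (u⁻¹ * cs.simple i) < cs.length u⁻¹ then u⁻¹ * cs.simple i else u⁻¹)
            ω' = _
        rw [if_neg hcond]
      obtain ⟨ihA, ihB, ihC⟩ := ih hω'red u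
      have huasc : cs.length u < cs.length (cs.simple i * u) := by
        rcases cs.length_simple_mul u i with h | h <;> omega
      rw [hm]
      refine ⟨ihA, ?_, ?_⟩
      · rw [hπc]
        exact bruhatLE_of_le_smul cs ihB hω'asc
      · intro z hzRW hzw
        have hzasc : cs.length z < cs.length (cs.simple i * z) :=
          weak_ascent cs hzRW huasc
        have h1 : BruhatLE cs z (cs.wordProd ω') := (desc_or_move cs hred hzw).2 hzasc
        exact ihC z hzRW h1


/-- Mixed meet property: the set `{x : x ≤_R u, x ≤ w}` has a unique maximal element
`m = u (u⁻¹ ↓ U_w)` for the strong Bruhat order. -/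
theorem stmt11 [Finite W] (u w : W) :
    RWeakLE cs (u * downR cs u⁻¹ w) u ∧ BruhatLE cs (u * downR cs u⁻¹ w) w ∧
    ∀ z : W, RWeakLE cs z u → BruhatLE cs z w → BruhatLE cs z (u * downR cs u⁻¹ w) := by
  have h := main_lemma cs (rword cs w) (rword_isReduced cs w) u
  rw [rword_wordProd cs w] at h
  exact h

end PaperBase
end

section
/- Let W be a finite Coxeter group and let x, y, w ∈ W. The polynomial Θ(x, y, w) ∈ ℤ[q] is divisible by q^{(ℓ(x) + ℓ(y) + ℓ(xy⁻¹))/2}, and its degree in q is at most ℓ(x) + ℓ(y). (Note ℓ(xy⁻¹) ≡ ℓ(x) + ℓ(y) mod 2, so the exponent is an integer.) -/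
open Polynomial

namespace PaperBase

variable {B : Type*} {W : Type*} [Group W] {M : CoxeterMatrix B} (cs : CoxeterSystem M W)

local prefix:100 "s" => cs.simple
local prefix:100 "ℓ" => cs.length
local prefix:100 "π" => cs.wordProd

open Classical in
noncomputable def sigmaPerm (i : B) : Equiv.Perm (W × ℤˣ) where
  toFun p := (s i * p.1 * s i, if p.1 = s i then -p.2 else p.2)
  invFun p := (s i * p.1 * s i, if p.1 = s i then -p.2 else p.2)
  left_inv := by
    rintro ⟨t, ε⟩
    by_cases h : t = s i
    · subst h
      simp [cs.simple_mul_simple_self, cs.simple_mul_simple_cancel_right]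
    · have h2 : s i * t * s i ≠ s i := by
        intro hh
        apply h
        have := congrArg (fun z => s i * z * s i) hh
        simpa [mul_assoc, cs.simple_mul_simple_cancel_left,
          cs.simple_mul_simple_cancel_right, cs.simple_mul_simple_self] using this
      simp only [h, if_neg h2, if_neg h]
      group
      simp [cs.simple_mul_simple_cancel_left]
  right_inv := by
    rintro ⟨t, ε⟩
    by_cases h : t = s i
    · subst h
      simp [cs.simple_mul_simple_self, cs.simple_mul_simple_cancel_right]
    · have h2 : s i * t * s i ≠ s i := by
        intro hh
        apply h
        have := congrArg (fun z => s i * z * s i) hh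
        simpa [mul_assoc, cs.simple_mul_simple_cancel_left,
          cs.simple_mul_simple_cancel_right, cs.simple_mul_simple_self] using this
      simp only [h, if_neg h2, if_neg h]
      group
      simp [cs.simple_mul_simple_cancel_left]

open Classical in
lemma sigmaPerm_apply (i : B) (t : W) (ε : ℤˣ) :
    sigmaPerm cs i (t, ε) = (s i * t * s i, ε * (if t = s i then -1 else 1)) := by
  show (_, _) = (_, _)
  by_cases h : t = s i <;> simp [sigmaPerm, h]

lemma simple_mul_c (i j : B) : s j * (s i * s j) = (s i * s j)⁻¹ * s j := by
  rw [mul_inv_rev, cs.inv_simple, cs.inv_simple, mul_assoc]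

lemma cinv_shift (i j : B) (r : ℕ) :
    ((s i * s j)⁻¹) * (((s i * s j)⁻¹) ^ r * s j) * (s i * s j)
      = ((s i * s j)⁻¹) ^ (r + 2) * s j := by
  rw [mul_assoc ((s i * s j)⁻¹) (((s i * s j)⁻¹) ^ r * s j) (s i * s j)]
  rw [mul_assoc (((s i * s j)⁻¹) ^ r) (s j) (s i * s j)]
  rw [simple_mul_c cs i j]
  rw [← mul_assoc (((s i * s j)⁻¹) ^ r) ((s i * s j)⁻¹) (s j)]
  rw [← pow_succ ((s i * s j)⁻¹) r]
  rw [← mul_assoc ((s i * s j)⁻¹) (((s i * s j)⁻¹) ^ (r + 1)) (s j)]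
  rw [← pow_succ' ((s i * s j)⁻¹) (r + 1)]

open Classical in
lemma sigmaPerm_pow (i j : B) (k : ℕ) (t : W) (ε : ℤˣ) :
    ((sigmaPerm cs i * sigmaPerm cs j) ^ k) (t, ε) =
      ((s i * s j) ^ k * t * ((s i * s j)⁻¹) ^ k,
        ε * ∏ r ∈ Finset.range (2 * k),
          (if t = ((s i * s j)⁻¹) ^ r * s j then (-1 : ℤˣ) else 1)) := by
  induction k generalizing t ε with
  | zero => simp
  | succ k ih =>
    have hstep : (sigmaPerm cs i * sigmaPerm cs j) (t, ε) =
        ((s i * s j) * t * (s i * s j)⁻¹,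
          ε * ((if t = ((s i * s j)⁻¹) ^ 0 * s j then (-1 : ℤˣ) else 1) *
               (if t = ((s i * s j)⁻¹) ^ 1 * s j then (-1 : ℤˣ) else 1))) := by
      rw [Equiv.Perm.mul_apply, sigmaPerm_apply, sigmaPerm_apply]
      have hc : s j * t * s j = s i ↔ t = ((s i * s j)⁻¹) ^ 1 * s j := by
        rw [pow_one]
        constructor
        · intro hh
          have : t = s j * s i * s j := by
            have := congrArg (fun z => s j * z * s j) hh
            simpa [mul_assoc, cs.simple_mul_simple_cancel_left,
              cs.simple_mul_simple_cancel_right] using this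
          rw [this, mul_inv_rev, cs.inv_simple, cs.inv_simple, mul_assoc]
        · intro hh
          rw [hh, mul_inv_rev, cs.inv_simple, cs.inv_simple]
          simp [mul_assoc, cs.simple_mul_simple_cancel_left,
            cs.simple_mul_simple_cancel_right]
      have hc0 : (t = ((s i * s j)⁻¹) ^ 0 * s j) ↔ t = s j := by simp
      rw [Prod.mk.injEq]
      constructor
      · show s i * (s j * t * s j) * s i = _
        rw [mul_inv_rev, cs.inv_simple, cs.inv_simple]
        group
      · show (ε * _) * _ = _
        rw [if_congr hc rfl rfl]
        rw [if_congr hc0 rfl rfl]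
        by_cases h1 : t = ((s i * s j)⁻¹) ^ 1 * s j <;>
          by_cases h0 : t = s j <;> simp [h1, h0] <;> ring
    rw [pow_succ, Equiv.Perm.mul_apply, hstep, ih]
    have hcond : ∀ r : ℕ, ((s i * s j) * t * (s i * s j)⁻¹ = ((s i * s j)⁻¹) ^ r * s j)
        ↔ (t = ((s i * s j)⁻¹) ^ (r + 1 + 1) * s j) := by
      intro r
      have hc2 : ((s i * s j)⁻¹) ^ (r + 1 + 1) * s j
          = ((s i * s j)⁻¹) * (((s i * s j)⁻¹) ^ r * s j) * (s i * s j) := (cinv_shift cs i j r).symm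
      rw [hc2]
      constructor
      · intro hh
        rw [← hh]
        simp [mul_assoc]
      · intro hh
        rw [hh]
        simp [mul_assoc]
    rw [Prod.mk.injEq]
    constructor
    · show (s i * s j) ^ k * ((s i * s j) * t * (s i * s j)⁻¹) * ((s i * s j)⁻¹) ^ k = _
      rw [pow_succ (s i * s j) k, pow_succ' ((s i * s j)⁻¹) k]
      simp [mul_assoc]
    · show _ * ∏ r ∈ Finset.range (2 * k), _ = _
      have hreindex : (∏ r ∈ Finset.range (2 * k),
            (if (s i * s j) * t * (s i * s j)⁻¹ = ((s i * s j)⁻¹) ^ r * s j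
              then (-1 : ℤˣ) else 1))
          = ∏ r ∈ Finset.range (2 * k),
            (if t = ((s i * s j)⁻¹) ^ (r + 1 + 1) * s j then (-1 : ℤˣ) else 1) := by
        refine Finset.prod_congr rfl fun r _ => ?_
        rw [if_congr (hcond r) rfl rfl]
      rw [hreindex]
      have h2k : 2 * (k + 1) = (2 * k + 1) + 1 := by ring
      rw [h2k]
      rw [Finset.prod_range_succ' (fun r => if t = ((s i * s j)⁻¹) ^ r * s j
        then (-1 : ℤˣ) else 1) (2 * k + 1)]
      rw [Finset.prod_range_succ' (fun r => if t = ((s i * s j)⁻¹) ^ (r + 1) * s j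
        then (-1 : ℤˣ) else 1) (2 * k)]
      show ε * _ * _ = ε * (_ * _ * _)
      ac_rfl

open Classical in
lemma sigma_liftable : M.IsLiftable (fun i => sigmaPerm cs i) := by
  intro i j
  refine Equiv.ext fun x => ?_
  obtain ⟨t, ε⟩ := x
  show ((sigmaPerm cs i * sigmaPerm cs j) ^ M i j) (t, ε) = (t, ε)
  rw [sigmaPerm_pow]
  rw [Prod.mk.injEq]
  constructor
  · rw [cs.simple_mul_simple_pow, inv_pow, cs.simple_mul_simple_pow, inv_one]
    simp
  · have hper : ∀ r : ℕ, ((s i * s j)⁻¹) ^ (M i j + r) = ((s i * s j)⁻¹) ^ r := by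
      intro r
      rw [pow_add, inv_pow, cs.simple_mul_simple_pow, inv_one, one_mul]
    have h2 : (2 : ℕ) * M i j = M i j + M i j := by ring
    rw [h2, Finset.prod_range_add]
    have e1 : ∀ r ∈ Finset.range (M i j),
        (if t = ((s i * s j)⁻¹) ^ (M i j + r) * s j then (-1 : ℤˣ) else 1)
          = (if t = ((s i * s j)⁻¹) ^ r * s j then (-1 : ℤˣ) else 1) := by
      intro r _
      rw [if_congr (by rw [hper r]) rfl rfl]
    rw [Finset.prod_congr rfl e1, ← Finset.prod_mul_distrib]
    have e2 : ∀ r ∈ Finset.range (M i j),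
        (if t = ((s i * s j)⁻¹) ^ r * s j then (-1 : ℤˣ) else 1) *
        (if t = ((s i * s j)⁻¹) ^ r * s j then (-1 : ℤˣ) else 1) = 1 := by
      intro r _
      split <;> decide
    rw [Finset.prod_congr rfl e2, Finset.prod_const_one, mul_one]


/-- The sign representation of `W` on `W × ℤˣ`. -/
noncomputable def rho : W →* Equiv.Perm (W × ℤˣ) :=
  cs.lift ⟨fun i => sigmaPerm cs i, sigma_liftable cs⟩

lemma rho_simple (i : B) : rho cs (s i) = sigmaPerm cs i :=
  cs.lift_apply_simple (sigma_liftable cs) i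

open Classical in
lemma rho_wordProd (ω : List B) (t : W) (ε : ℤˣ) :
    rho cs (π ω) (t, ε) = (π ω * t * (π ω)⁻¹,
      ε * ((cs.rightInvSeq ω).map (fun x => if x = t then (-1 : ℤˣ) else 1)).prod) := by
  induction ω generalizing ε with
  | nil => simp [cs.wordProd_nil]
  | cons i ω' ih =>
    rw [cs.wordProd_cons, map_mul, Equiv.Perm.mul_apply, ih, rho_simple, sigmaPerm_apply]
    have hris : cs.rightInvSeq (i :: ω') = ((π ω')⁻¹ * s i * π ω') :: cs.rightInvSeq ω' := rfl
    rw [hris, Prod.mk.injEq]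
    constructor
    · rw [mul_inv_rev, cs.inv_simple]
      simp [mul_assoc]
    · rw [List.map_cons, List.prod_cons]
      have hiff : (π ω' * t * (π ω')⁻¹ = s i) ↔ ((π ω')⁻¹ * s i * π ω' = t) := by
        constructor
        · intro hh
          rw [← hh]
          simp [mul_assoc]
        · intro hh
          rw [← hh]
          simp [mul_assoc]
      rw [if_congr hiff rfl rfl, mul_assoc,
        mul_comm ((List.map (fun x => if x = t then (-1 : ℤˣ) else 1) (cs.rightInvSeq ω')).prod)]

/-- The sign cocycle. -/
noncomputable def mu (w t : W) : ℤˣ := (rho cs w (t, 1)).2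

open Classical in
lemma mu_eq_prod (ω : List B) (t : W) :
    mu cs (π ω) t
      = ((cs.rightInvSeq ω).map (fun x => if x = t then (-1 : ℤˣ) else 1)).prod := by
  rw [mu, rho_wordProd, one_mul]

lemma rho_apply (w t : W) (ε : ℤˣ) :
    rho cs w (t, ε) = (w * t * w⁻¹, ε * mu cs w t) := by
  obtain ⟨ω, _, rfl⟩ := cs.exists_reduced_word' w
  rw [rho_wordProd, mu_eq_prod]

lemma mu_mul (a b t : W) : mu cs (a * b) t = mu cs b t * mu cs a (b * t * b⁻¹) := by
  have h : rho cs (a * b) (t, 1) = rho cs a (rho cs b (t, 1)) := by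
    rw [map_mul, Equiv.Perm.mul_apply]
  rw [mu, h, rho_apply cs b t 1, rho_apply cs a (b * t * b⁻¹) (1 * mu cs b t), one_mul]

lemma mu_neg_one_imp {w t : W} (h : mu cs w t = -1) : ℓ (w * t) < ℓ w := by
  classical
  obtain ⟨ω, hred, rfl⟩ := cs.exists_reduced_word' w
  have hmem : t ∈ cs.rightInvSeq ω := by
    by_contra hmem
    have : ((cs.rightInvSeq ω).map (fun x => if x = t then (-1 : ℤˣ) else 1)).prod = 1 := by
      apply List.prod_eq_one
      intro x hx
      obtain ⟨y, hy, rfl⟩ := List.mem_map.mp hx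
      rw [if_neg]
      intro hyt
      exact hmem (hyt ▸ hy)
    rw [mu_eq_prod, this] at h
    exact absurd h (by decide)
  exact (cs.isRightInversion_of_mem_rightInvSeq hred hmem).2

lemma mu_one (t : W) : mu cs 1 t = 1 := by
  rw [mu, map_one]
  rfl

lemma mu_simple_self (i : B) : mu cs (s i) (s i) = -1 := by
  rw [mu, rho_simple, sigmaPerm_apply, if_pos rfl, mul_neg, mul_one]

lemma mu_refl_self {t : W} (ht : cs.IsReflection t) : mu cs t t = -1 := by
  obtain ⟨v, i, rfl⟩ := ht
  have hmm := mu_mul cs (v * s i) v⁻¹ (v * s i * v⁻¹)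
  have hv : v⁻¹ * (v * s i * v⁻¹) * v⁻¹⁻¹ = s i := by
    simp [mul_assoc]
  rw [hv] at hmm
  have hmm2 := mu_mul cs v (s i) (s i)
  have hsi : s i * s i * (s i)⁻¹ = s i := by
    rw [cs.inv_simple, cs.simple_mul_simple_cancel_right]
  rw [hsi, mu_simple_self] at hmm2
  have hone := mu_mul cs v v⁻¹ (v * s i * v⁻¹)
  rw [mul_inv_cancel, mu_one, hv] at hone
  rw [hmm, hmm2, mul_left_comm, ← hone, mul_one]

lemma mu_of_inversion {w t : W} (ht : cs.IsReflection t) (h : ℓ (w * t) < ℓ w) :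
    mu cs w t = -1 := by
  have hw : w = (w * t) * t := by
    rw [mul_assoc, ht.mul_self, mul_one]
  have hmm : mu cs ((w * t) * t) t = mu cs t t * mu cs (w * t) (t * t * t⁻¹) := mu_mul cs _ _ _
  have htt : t * t * t⁻¹ = t := by rw [ht.mul_self, one_mul, ht.inv]
  rw [htt, mu_refl_self cs ht] at hmm
  rcases Int.units_eq_one_or (mu cs (w * t) t) with h1 | h1
  · rw [← hw, h1, mul_one] at hmm
    exact hmm
  · exfalso
    have := mu_neg_one_imp cs h1
    rw [mul_assoc, ht.mul_self, mul_one] at this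
    omega

/-- The key length lemma: if `ℓ(Qs) > ℓ(Q)` and `ℓ(su) < ℓ(u)` then `ℓ(Qsu) < ℓ(Qu)`. -/
lemma length_L (Q u : W) (j : B) (hQ : ℓ Q < ℓ (Q * s j)) (hu : ℓ (s j * u) < ℓ u) :
    ℓ (Q * s j * u) < ℓ (Q * u) := by
  have ht : cs.IsReflection (u⁻¹ * s j * u) := ⟨u⁻¹, j, by rw [inv_inv]⟩
  have h1 : mu cs u (u⁻¹ * s j * u) = -1 := by
    apply mu_of_inversion cs ht
    have : u * (u⁻¹ * s j * u) = s j * u := by simp [mul_assoc]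
    rw [this]
    exact hu
  have h2 : mu cs Q (s j) = 1 := by
    rcases Int.units_eq_one_or (mu cs Q (s j)) with h | h
    · exact h
    · exfalso
      have := mu_neg_one_imp cs h
      omega
  have h3 : mu cs (Q * u) (u⁻¹ * s j * u) = -1 := by
    rw [mu_mul]
    have : u * (u⁻¹ * s j * u) * u⁻¹ = s j := by simp [mul_assoc]
    rw [this, h1, h2, mul_one]
  have := mu_neg_one_imp cs h3
  have heq : Q * u * (u⁻¹ * s j * u) = Q * s j * u := by simp [mul_assoc]
  rw [heq] at this
  exact this


lemma heckeMulSimple_single (i : B) (w : W) (c : Polynomial ℤ) :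
    heckeMulSimple cs i (Finsupp.single w c) =
      if cs.length w < cs.length (cs.simple i * w) then Finsupp.single (cs.simple i * w) c
      else Finsupp.single w ((X - 1) * c) + Finsupp.single (cs.simple i * w) (X * c) := by
  unfold heckeMulSimple
  rw [Finsupp.sum_single_index]
  split <;> simp

lemma heckeMulSimple_add (i : B) (f g : W →₀ Polynomial ℤ) :
    heckeMulSimple cs i (f + g) = heckeMulSimple cs i f + heckeMulSimple cs i g := by
  unfold heckeMulSimple
  refine Finsupp.sum_add_index' (fun w => ?_) (fun w c₁ c₂ => ?_)
  · split <;> simp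
  · split <;> simp [mul_add, Finsupp.single_add] <;> abel

lemma heckeMulSimple_smul (i : B) (c : Polynomial ℤ) (f : W →₀ Polynomial ℤ) :
    heckeMulSimple cs i (c • f) = c • heckeMulSimple cs i f := by
  unfold heckeMulSimple
  rw [Finsupp.sum_smul_index' (fun w => by split <;> simp), Finsupp.smul_sum]
  refine Finsupp.sum_congr fun w hw => ?_
  rw [smul_eq_mul]
  split
  · rw [Finsupp.smul_single']
  · rw [smul_add, Finsupp.smul_single', Finsupp.smul_single',
      show (X - 1) * (c * f w) = c * ((X - 1) * f w) by ring,
      show (X : Polynomial ℤ) * (c * f w) = c * (X * f w) by ring]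

lemma heckeMulWord_append_singleton (ω : List B) (j : B) (f : W →₀ Polynomial ℤ) :
    heckeMulWord cs (ω ++ [j]) f = heckeMulWord cs ω (heckeMulSimple cs j f) := by
  unfold heckeMulWord
  rw [List.foldr_append]
  rfl

lemma heckeMulWord_add (ω : List B) (f g : W →₀ Polynomial ℤ) :
    heckeMulWord cs ω (f + g) = heckeMulWord cs ω f + heckeMulWord cs ω g := by
  induction ω with
  | nil => rfl
  | cons i ω ih =>
    show heckeMulSimple cs i (heckeMulWord cs ω (f + g)) = _
    rw [ih, heckeMulSimple_add]
    rfl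

lemma heckeMulWord_smul (ω : List B) (c : Polynomial ℤ) (f : W →₀ Polynomial ℤ) :
    heckeMulWord cs ω (c • f) = c • heckeMulWord cs ω f := by
  induction ω with
  | nil => rfl
  | cons i ω ih =>
    show heckeMulSimple cs i (heckeMulWord cs ω (c • f)) = _
    rw [ih, heckeMulSimple_smul]
    rfl

lemma key_bound : ∀ (ω : List B), cs.IsReduced ω → ∀ (u z : W) (k : ℕ),
    2 * k = ω.length + cs.length u + cs.length (cs.wordProd ω * u) →
    ((X : Polynomial ℤ) ^ k ∣ X ^ cs.length z * heckeMulWord cs ω (Finsupp.single u 1) z) ∧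
      (X ^ cs.length z * heckeMulWord cs ω (Finsupp.single u 1) z).degree
        ≤ ((ω.length + cs.length u : ℕ) : WithBot ℕ) := by
  intro ω
  induction ω using List.reverseRecOn with
  | nil =>
    intro _ u z k hk
    rw [cs.wordProd_nil, one_mul, List.length_nil] at hk
    have hnil : heckeMulWord cs [] (Finsupp.single u (1 : Polynomial ℤ)) = Finsupp.single u 1 :=
      rfl
    rw [hnil]
    rcases eq_or_ne u z with rfl | hne
    · rw [Finsupp.single_eq_same, mul_one]
      constructor
      · have hkz : k ≤ cs.length u := by omega
        exact pow_dvd_pow X hkz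
      · rw [degree_X_pow]
        have h : cs.length u ≤ ([] : List B).length + cs.length u := by simp
        exact_mod_cast h
    · rw [Finsupp.single_eq_of_ne' hne, mul_zero]
      exact ⟨dvd_zero _, by rw [degree_zero]; exact bot_le⟩
  | append_singleton ω' j ih =>
    intro hred u z k hk
    have hred' : cs.IsReduced ω' := by
      have h1 : (ω' ++ [j]).take ω'.length = ω' := by simp
      have := hred.take ω'.length
      rwa [h1] at this
    have hπ : cs.wordProd (ω' ++ [j]) = cs.wordProd ω' * cs.simple j := by
      rw [cs.wordProd_append]
      congr 1
      rw [show [j] = j :: [] from rfl, cs.wordProd_cons, cs.wordProd_nil, mul_one]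
    have hQs : cs.length (cs.wordProd ω' * cs.simple j) = cs.length (cs.wordProd ω') + 1 := by
      have h1 : cs.length (cs.wordProd (ω' ++ [j])) = ω'.length + 1 := by
        rw [hred]
        simp
      have h2 : cs.length (cs.wordProd ω') = ω'.length := hred'
      rw [← hπ, h1, h2]
    rw [heckeMulWord_append_singleton, heckeMulSimple_single]
    rw [hπ] at hk
    by_cases hc : cs.length u < cs.length (cs.simple j * u)
    · rw [if_pos hc]
      have hlen : cs.length (cs.simple j * u) = cs.length u + 1 :=
        (cs.length_simple_mul u j).resolve_right (by omega)
      have hk' : 2 * k = ω'.length + cs.length (cs.simple j * u)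
          + cs.length (cs.wordProd ω' * (cs.simple j * u)) := by
        rw [hlen, ← mul_assoc]
        rw [List.length_append, List.length_singleton] at hk
        omega
      have := ih hred' (cs.simple j * u) z k hk'
      refine ⟨this.1, le_trans this.2 ?_⟩
      rw [Nat.cast_le]
      simp [hlen]
      omega
    · rw [if_neg hc]
      have hne := cs.length_simple_mul_ne u j
      have hd : cs.length u = cs.length (cs.simple j * u) + 1 := by
        rcases cs.length_simple_mul u j with h | h <;> omega
      -- rewrite the two singles as smul of basic ones
      have hsplit : (Finsupp.single u ((X : Polynomial ℤ) - 1)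
            + Finsupp.single (cs.simple j * u) X)
          = ((X : Polynomial ℤ) - 1) • Finsupp.single u (1 : Polynomial ℤ)
            + (X : Polynomial ℤ) • Finsupp.single (cs.simple j * u) (1 : Polynomial ℤ) := by
        rw [Finsupp.smul_single', Finsupp.smul_single', mul_one, mul_one]
      rw [show Finsupp.single u ((X - 1) * 1) + Finsupp.single (cs.simple j * u) (X * 1)
          = Finsupp.single u ((X : Polynomial ℤ) - 1) + Finsupp.single (cs.simple j * u) X by
            rw [mul_one, mul_one]]
      rw [hsplit, heckeMulWord_add, heckeMulWord_smul, heckeMulWord_smul]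
      -- the two summands
      set g1 := heckeMulWord cs ω' (Finsupp.single u (1 : Polynomial ℤ)) with hg1
      set g2 := heckeMulWord cs ω' (Finsupp.single (cs.simple j * u) (1 : Polynomial ℤ)) with hg2
      have happ : (((X : Polynomial ℤ) - 1) • g1 + (X : Polynomial ℤ) • g2) z
          = (X - 1) * g1 z + X * g2 z := by
        rw [Finsupp.add_apply, Finsupp.smul_apply, Finsupp.smul_apply, smul_eq_mul, smul_eq_mul]
      rw [happ]
      -- lengths
      rw [List.length_append, List.length_singleton] at hk
      have hL : cs.length (cs.wordProd ω' * cs.simple j * u) < cs.length (cs.wordProd ω' * u) :=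
        length_L cs (cs.wordProd ω') u j (by omega) (by omega)
      have hpar : cs.length (cs.wordProd ω' * u) % 2
          = (cs.length (cs.wordProd ω') + cs.length u) % 2 := cs.length_mul_mod_two _ _
      have hQl : cs.length (cs.wordProd ω') = ω'.length := hred'
      set k1 := (ω'.length + cs.length u + cs.length (cs.wordProd ω' * u)) / 2 with hk1def
      have hk1 : 2 * k1 = ω'.length + cs.length u + cs.length (cs.wordProd ω' * u) := by
        omega
      have hkk1 : k ≤ k1 := by omega
      have hk2 : 2 * (k - 1) = ω'.length + cs.length (cs.simple j * u)
          + cs.length (cs.wordProd ω' * (cs.simple j * u)) := by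
        rw [← mul_assoc]
        omega
      have hkpos : 1 ≤ k := by omega
      have ih1 := ih hred' u z k1 hk1
      have ih2 := ih hred' (cs.simple j * u) z (k - 1) hk2
      constructor
      · rw [mul_add]
        refine dvd_add ?_ ?_
        · rw [show (X : Polynomial ℤ) ^ cs.length z * ((X - 1) * g1 z)
              = (X - 1) * (X ^ cs.length z * g1 z) by ring]
          exact Dvd.dvd.mul_left ((pow_dvd_pow X hkk1).trans ih1.1) _
        · rw [show (X : Polynomial ℤ) ^ cs.length z * (X * g2 z)
              = X * (X ^ cs.length z * g2 z) by ring]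
          have : (X : Polynomial ℤ) ^ k = X * X ^ (k - 1) := by
            rw [← pow_succ']
            congr 1
            omega
          rw [this]
          exact mul_dvd_mul_left X ih2.1
      · rw [mul_add]
        refine le_trans (degree_add_le _ _) (max_le ?_ ?_)
        · rw [show (X : Polynomial ℤ) ^ cs.length z * ((X - 1) * g1 z)
              = (X - 1) * (X ^ cs.length z * g1 z) by ring]
          refine le_trans (degree_mul_le _ _) ?_
          have hdX : ((X : Polynomial ℤ) - 1).degree = 1 := by
            rw [show (X : Polynomial ℤ) - 1 = X - C 1 by rw [map_one]]
            exact degree_X_sub_C 1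
          rw [hdX]
          calc (1 : WithBot ℕ) + (X ^ cs.length z * g1 z).degree
              ≤ 1 + ((ω'.length + cs.length u : ℕ) : WithBot ℕ) := by
                exact add_le_add_right ih1.2 1
            _ = (((ω' ++ [j]).length + cs.length u : ℕ) : WithBot ℕ) := by
                rw [show ((1 : WithBot ℕ)) = ((1 : ℕ) : WithBot ℕ) from rfl, ← Nat.cast_add]
                congr 1
                simp
                omega
        · rw [show (X : Polynomial ℤ) ^ cs.length z * (X * g2 z)
              = X * (X ^ cs.length z * g2 z) by ring]
          refine le_trans (degree_mul_le _ _) ?_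
          rw [degree_X]
          calc (1 : WithBot ℕ) + (X ^ cs.length z * g2 z).degree
              ≤ 1 + ((ω'.length + cs.length (cs.simple j * u) : ℕ) : WithBot ℕ) := by
                exact add_le_add_right ih2.2 1
            _ ≤ (((ω' ++ [j]).length + cs.length u : ℕ) : WithBot ℕ) := by
                rw [show ((1 : WithBot ℕ)) = ((1 : ℕ) : WithBot ℕ) from rfl, ← Nat.cast_add]
                rw [Nat.cast_le]
                simp
                omega

/-- `Θ(x,y,w)` is divisible by `q^{(ℓ(x)+ℓ(y)+ℓ(xy⁻¹))/2}` (the exponent is an integer since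
`ℓ(xy⁻¹) ≡ ℓ(x)+ℓ(y) mod 2`), and its degree in `q` is at most `ℓ(x)+ℓ(y)`. -/
theorem stmt12 [Finite W] (x y w : W) :
    (cs.length x + cs.length y + cs.length (x * y⁻¹)) % 2 = 0 ∧
    (X : Polynomial ℤ) ^ ((cs.length x + cs.length y + cs.length (x * y⁻¹)) / 2) ∣
      Theta cs x y w ∧
    (Theta cs x y w).degree ≤ ((cs.length x + cs.length y : ℕ) : WithBot ℕ) := by
  have hred := rword_isReduced cs x
  have hπ := rword_wordProd cs x
  have hlen : (rword cs x).length = cs.length x := by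
    have h1 : cs.length (cs.wordProd (rword cs x)) = (rword cs x).length := hred
    rw [hπ] at h1
    omega
  have hinv : cs.length (y⁻¹ : W) = cs.length y := cs.length_inv y
  have hpar : cs.length (x * y⁻¹) % 2 = (cs.length x + cs.length (y⁻¹ : W)) % 2 :=
    cs.length_mul_mod_two x y⁻¹
  have hmod : (cs.length x + cs.length y + cs.length (x * y⁻¹)) % 2 = 0 := by omega
  set k := (cs.length x + cs.length y + cs.length (x * y⁻¹)) / 2 with hkdef
  have hk : 2 * k = (rword cs x).length + cs.length (y⁻¹ : W)
      + cs.length (cs.wordProd (rword cs x) * y⁻¹) := by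
    rw [hπ, hlen, hinv]
    omega
  refine ⟨hmod, ?_, ?_⟩
  · unfold Theta Lam TT
    rw [Finsupp.sum]
    refine Finset.dvd_sum fun z hz => ?_
    split
    · exact (key_bound cs (rword cs x) hred y⁻¹ z k hk).1
    · exact dvd_zero _
  · unfold Theta Lam TT
    rw [Finsupp.sum]
    refine le_trans (degree_sum_le _ _) ?_
    refine Finset.sup_le fun z hz => ?_
    split
    · have h2 := (key_bound cs (rword cs x) hred y⁻¹ z k hk).2
      rwa [hlen, hinv] at h2
    · rw [degree_zero]
      exact bot_le


end PaperBase
end
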